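/- arXiv:math/0505415 — 6 statements merged into one kernel-verified Lean document; each statement's English description precedes it below -/
import Mathlib

section
/- Fix integers k ≥ 0 and d ≥ 2k-1. For each n ≥ k+1, let f(n) be the minimum, over all n-vertex graphs G of treewidth exactly k, of the number of vertices of G with degree at most d. Then f(n)/n converges to (d-2k+1)/(d-k+1) as n → ∞. -/
/-- The degree of a vertex `v` in `G` (number of neighbours). -/
noncomputable def degN {V : Type*} (G : SimpleGraph V) (v : V) : ℕ :=
  (G.neighborSet v).ncard

/-- `G` is a `k`-tree. This encodes the recursive definition (start with a `(k+1)`-clique and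
repeatedly add a new vertex adjacent to exactly the vertices of an existing `k`-clique) via a
construction ordering `e : V ≃ Fin n`: the first `k+1` vertices form a clique, and every later
vertex is adjacent among the earlier vertices to exactly the `k` vertices of a clique `S`. -/
def IsKTree {V : Type*} (k : ℕ) (G : SimpleGraph V) : Prop :=
  ∃ (n : ℕ) (e : V ≃ Fin n),
    k + 1 ≤ n ∧
    (∀ i j : Fin n, i < j → (j : ℕ) < k + 1 → G.Adj (e.symm i) (e.symm j)) ∧
    (∀ j : Fin n, k + 1 ≤ (j : ℕ) →
      ∃ S : Finset (Fin n), S.card = k ∧ (∀ i ∈ S, i < j) ∧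
        (∀ i : Fin n, i < j → (G.Adj (e.symm i) (e.symm j) ↔ i ∈ S)) ∧
        (∀ i ∈ S, ∀ i' ∈ S, i ≠ i' → G.Adj (e.symm i) (e.symm i')))

/-- The treewidth of a graph `G`: the minimum `k` such that `G` is a spanning subgraph
of a `k`-tree. -/
noncomputable def treewidth {V : Type*} (G : SimpleGraph V) : ℕ :=
  sInf {k : ℕ | ∃ H : SimpleGraph V, IsKTree k H ∧ G ≤ H}


/-!
A graph of treewidth `k` is a subgraph of a `k`-tree, and in the construction order of a `k`-tree
every vertex has at most `k` earlier neighbours. Counting each edge at its later endpoint, the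
numbers of later neighbours sum to at most `k n`, while a vertex of degree `> d` has at least
`d + 1 - k` later neighbours; so at most `k n / (d + 1 - k)` vertices have degree `> d`.

Conversely, take the `k`-th power of a path on about `k n / (d + 1 - k)` vertices, cut it into
blocks of `k` consecutive vertices, and attach `d + 1 - 2k` leaves to each block (each leaf
adjacent to the whole block). This is a `k`-tree in which every path vertex away from the two ends
has degree at least `2k + (d + 1 - 2k) = d + 1`.
-/

open Finset
open scoped Classical

section Degeneracy

variable {V : Type*} [Fintype V]

lemma degN_eq_card_filter (G : SimpleGraph V) (v : V) : degN G v = #{w | G.Adj v w} := by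
  rw [degN, Set.ncard_eq_toFinset_card']
  congr 1
  ext w
  simp

lemma degN_eq_card_adj_lt_add_card_adj_gt (G : SimpleGraph V) {σ : V → ℕ}
    (hσ : Function.Injective σ) (v : V) :
    degN G v = #{w | G.Adj v w ∧ σ w < σ v} + #{w | G.Adj v w ∧ σ v < σ w} := by
  rw [degN_eq_card_filter, ← card_union_of_disjoint]
  · congr 1
    ext w
    simp only [mem_filter, mem_univ, true_and, mem_union]
    constructor
    · intro h
      have hne : σ w ≠ σ v := hσ.ne (G.ne_of_adj h).symm
      rcases hne.lt_or_gt with hlt | hgt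
      · exact Or.inl ⟨h, hlt⟩
      · exact Or.inr ⟨h, hgt⟩
    · rintro (⟨h, -⟩ | ⟨h, -⟩) <;> exact h
  · exact disjoint_filter.2 fun w _ h₁ h₂ => h₁.2.asymm h₂.2

lemma sum_card_adj_lt_eq_sum_card_adj_gt (G : SimpleGraph V) (σ : V → ℕ) :
    ∑ v, #{w | G.Adj v w ∧ σ w < σ v} = ∑ v, #{w | G.Adj v w ∧ σ v < σ w} := by
  simp only [card_filter]
  rw [sum_comm]
  refine sum_congr rfl fun v _ => sum_congr rfl fun w _ => ?_
  simp only [G.adj_comm v w]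

def IsDegeneracyOrder (G : SimpleGraph V) (k : ℕ) (σ : V → ℕ) : Prop :=
  Function.Injective σ ∧ ∀ v, #{w | G.Adj v w ∧ σ w < σ v} ≤ k

namespace IsDegeneracyOrder

variable {G H : SimpleGraph V} {k : ℕ} {σ : V → ℕ}

lemma mono (h : IsDegeneracyOrder H k σ) (hGH : G ≤ H) : IsDegeneracyOrder G k σ :=
  ⟨h.1, fun v => (card_le_card fun w hw => by
    simp only [mem_filter, mem_univ, true_and] at hw ⊢
    exact ⟨hGH hw.1, hw.2⟩).trans (h.2 v)⟩

lemma card_le_of_isClique (h : IsDegeneracyOrder G k σ) {T : Finset V}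
    (hT : G.IsClique (T : Set V)) : #T ≤ k + 1 := by
  rcases T.eq_empty_or_nonempty with rfl | hne
  · simp
  obtain ⟨v, hv, hmax⟩ := exists_max_image T σ hne
  have hsub : T.erase v ⊆ ({w | G.Adj v w ∧ σ w < σ v} : Finset V) := fun w hw => by
    have hwv := ne_of_mem_erase hw
    have hwT := mem_of_mem_erase hw
    simp only [mem_filter, mem_univ, true_and]
    exact ⟨hT hv hwT hwv.symm, (hmax w hwT).lt_of_ne (h.1.ne hwv)⟩
  have := (card_le_card hsub).trans (h.2 v)
  rw [card_erase_of_mem hv] at this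
  omega

lemma sub_mul_card_le (h : IsDegeneracyOrder G k σ) (d : ℕ) :
    (d + 1 - k) * #{v | d + 1 ≤ degN G v} ≤ k * Fintype.card V := by
  have hfwd : ∀ v ∈ ({v | d + 1 ≤ degN G v} : Finset V),
      d + 1 - k ≤ #{w | G.Adj v w ∧ σ v < σ w} := fun v hv => by
    have := degN_eq_card_adj_lt_add_card_adj_gt G h.1 v
    have := h.2 v
    simp only [mem_filter, mem_univ, true_and] at hv
    omega
  calc (d + 1 - k) * #{v | d + 1 ≤ degN G v}
      = ∑ _v ∈ ({v | d + 1 ≤ degN G v} : Finset V), (d + 1 - k) := by simp [mul_comm]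
    _ ≤ ∑ v ∈ ({v | d + 1 ≤ degN G v} : Finset V), #{w | G.Adj v w ∧ σ v < σ w} :=
        sum_le_sum hfwd
    _ ≤ ∑ v, #{w | G.Adj v w ∧ σ v < σ w} := sum_le_sum_of_subset (subset_univ _)
    _ = ∑ v, #{w | G.Adj v w ∧ σ w < σ v} := (sum_card_adj_lt_eq_sum_card_adj_gt G σ).symm
    _ ≤ ∑ _v : V, k := sum_le_sum fun v _ => h.2 v
    _ = k * Fintype.card V := by simp [mul_comm]

end IsDegeneracyOrder

end Degeneracy

section KTree

variable {V : Type*} {k : ℕ} {H : SimpleGraph V}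

lemma IsKTree.exists_isClique (h : IsKTree k H) : ∃ T : Finset V, #T = k + 1 ∧ H.IsClique T := by
  obtain ⟨n, e, hn, hcl, -⟩ := h
  refine ⟨univ.map ((Fin.castLEEmb hn).trans e.symm.toEmbedding), by simp, ?_⟩
  simp only [coe_map, coe_univ, Set.image_univ]
  rintro - ⟨x, rfl⟩ - ⟨y, rfl⟩ hxy
  have hne : x ≠ y := fun hc => hxy (by rw [hc])
  simp only [Function.Embedding.trans_apply, Fin.castLEEmb_apply, Equiv.coe_toEmbedding]
  rcases hne.lt_or_gt with hlt | hgt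
  · exact hcl _ _ hlt (by simpa using y.is_le)
  · exact (hcl _ _ hgt (by simpa using x.is_le)).symm

variable [Fintype V]

lemma IsKTree.exists_isDegeneracyOrder (h : IsKTree k H) : ∃ σ, IsDegeneracyOrder H k σ := by
  obtain ⟨n, e, -, -, hS⟩ := h
  refine ⟨fun v => e v, Fin.val_injective.comp e.injective, fun v => ?_⟩
  by_cases hv : (e v : ℕ) < k + 1
  · calc #{w | H.Adj v w ∧ (e w : ℕ) < e v}
        ≤ #{w | e w < e v} := card_le_card fun w hw => by
          simp only [mem_filter, mem_univ, true_and] at hw ⊢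
          exact hw.2
      _ = #(Iio (e v)) := card_equiv e fun w => by simp
      _ ≤ k := by rw [Fin.card_Iio]; omega
  · obtain ⟨S, hScard, hSlt, hSadj, -⟩ := hS (e v) (by omega)
    rw [← hScard]
    refine (card_equiv e fun w => ?_).le
    simp only [mem_filter, mem_univ, true_and, Fin.val_fin_lt]
    constructor
    · rintro ⟨hadj, hlt⟩
      simpa using (hSadj (e w) hlt).1 (by simpa using hadj.symm)
    · intro hw
      have := (hSadj (e w) (hSlt _ hw)).2 hw
      simp only [Equiv.symm_apply_apply] at this
      exact ⟨this.symm, hSlt _ hw⟩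

lemma IsKTree.card_le_of_isClique (h : IsKTree k H) {T : Finset V}
    (hT : H.IsClique (T : Set V)) : #T ≤ k + 1 := by
  obtain ⟨σ, hσ⟩ := h.exists_isDegeneracyOrder
  exact hσ.card_le_of_isClique hT

lemma IsKTree.treewidth_eq (h : IsKTree k H) : treewidth H = k := by
  refine le_antisymm (Nat.sInf_le ⟨H, h, le_rfl⟩) ?_
  obtain ⟨H', hH', hle⟩ := Nat.sInf_mem (⟨k, H, h, le_rfl⟩ :
    {k | ∃ H' : SimpleGraph V, IsKTree k H' ∧ H ≤ H'}.Nonempty)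
  obtain ⟨T, hTcard, hT⟩ := h.exists_isClique
  have := hH'.card_le_of_isClique (hT.mono hle)
  rw [treewidth]
  omega

lemma isKTree_top [Nonempty V] : IsKTree (Fintype.card V - 1) (⊤ : SimpleGraph V) := by
  have := Fintype.card_pos (α := V)
  refine ⟨_, Fintype.equivFin V, by omega, fun i j hij _ => ?_, fun j hj => by omega⟩
  simpa using hij.ne

lemma exists_isKTree_treewidth [Nonempty V] (G : SimpleGraph V) :
    ∃ H : SimpleGraph V, IsKTree (treewidth G) H ∧ G ≤ H :=
  Nat.sInf_mem (⟨_, ⊤, isKTree_top, le_top⟩ :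
    {k | ∃ H : SimpleGraph V, IsKTree k H ∧ G ≤ H}.Nonempty)

lemma sub_mul_card_le_mul_card_degN_le [Nonempty V] (G : SimpleGraph V) (d : ℕ) :
    (d + 1 - 2 * treewidth G) * Fintype.card V ≤ (d + 1 - treewidth G) * #{v | degN G v ≤ d} := by
  obtain ⟨H, hH, hGH⟩ := exists_isKTree_treewidth G
  obtain ⟨σ, hσ⟩ := hH.exists_isDegeneracyOrder
  have hhigh := (hσ.mono hGH).sub_mul_card_le d
  have hsplit : #{v | d + 1 ≤ degN G v} + #{v | degN G v ≤ d} = Fintype.card V := by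
    rw [← card_univ, ← card_filter_add_card_filter_not (s := univ) (fun v => degN G v ≤ d),
      add_comm]
    simp only [not_le, Nat.succ_le_iff]
  have hsub : d + 1 - 2 * treewidth G = (d + 1 - treewidth G) - treewidth G := by omega
  have hPn := congrArg ((d + 1 - treewidth G) * ·) hsplit
  simp only [mul_add] at hPn
  rw [hsub, Nat.sub_mul]
  omega

end KTree

lemma card_filter_val_mem {n : ℕ} {T : Finset ℕ} (hT : ∀ x ∈ T, x < n) :
    #{i : Fin n | (i : ℕ) ∈ T} = #T := by
  rw [← card_attachFin T hT]
  congr 1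
  ext i
  simp

section Construction

/-- Vertices `0, …, m - 1` span the `k`-th power of a path; each later vertex `m + s * g + t`
(`t < s`) is a leaf attached to the block `k * g, …, k * g + k - 1` of that path. -/
def IsParent (k s m i j : ℕ) : Prop :=
  (j < m ∧ i < j ∧ j ≤ i + k) ∨
    (m ≤ j ∧ i < m ∧ k * ((j - m) / s) ≤ i ∧ i < k * ((j - m) / s) + k)

def extremalGraph (k s m n : ℕ) : SimpleGraph (Fin n) :=
  SimpleGraph.fromRel fun i j => IsParent k s m i j

variable {k s m n B r : ℕ}

lemma IsParent.lt {i j : ℕ} (h : IsParent k s m i j) : i < j := by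
  rcases h with h | h <;> omega

lemma IsParent.isParent_of_lt {a b j : ℕ} (ha : IsParent k s m a j) (hb : IsParent k s m b j)
    (hab : a < b) : IsParent k s m a b := by
  left
  rcases ha with ha | ha <;> rcases hb with hb | hb <;> omega

lemma extremalGraph_adj {i j : Fin n} (hij : i < j) :
    (extremalGraph k s m n).Adj i j ↔ IsParent k s m i j := by
  simp only [extremalGraph, SimpleGraph.fromRel_adj]
  refine ⟨fun ⟨_, h⟩ => h.resolve_right fun h' => ?_, fun h => ⟨hij.ne, Or.inl h⟩⟩
  exact absurd h'.lt (not_lt.2 hij.le)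

lemma card_filter_isParent (hm : m = k * B + r) (hn : n = m + s * B) (j : Fin n)
    (hj : k ≤ (j : ℕ)) : #{i : Fin n | IsParent k s m i j} = k := by
  obtain ⟨a, ha, hiff⟩ : ∃ a, a + k ≤ n ∧ ∀ i : ℕ, IsParent k s m i j ↔ i ∈ Ico a (a + k) := by
    by_cases hjm : (j : ℕ) < m
    · exact ⟨j - k, by omega, fun i => by simp only [IsParent, mem_Ico]; omega⟩
    · obtain ⟨g, hg⟩ : ∃ g, g = ((j : ℕ) - m) / s := ⟨_, rfl⟩
      have hgB : g < B := hg ▸ Nat.div_lt_of_lt_mul (by omega)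
      have : k * g + k ≤ m := by nlinarith
      exact ⟨k * g, by omega, fun i => by simp only [IsParent, mem_Ico, ← hg]; omega⟩
  rw [filter_congr fun (i : Fin n) _ => hiff i,
    card_filter_val_mem fun x hx => by rw [mem_Ico] at hx; omega, Nat.card_Ico]
  omega

lemma isKTree_extremalGraph (hm : m = k * B + r) (hn : n = m + s * B) (hB : 2 ≤ B)
    (hkn : k + 1 ≤ n) : IsKTree k (extremalGraph k s m n) := by
  refine ⟨n, Equiv.refl _, hkn, fun i j hij hj => ?_, fun j hj => ?_⟩
  · simp only [Equiv.refl_symm, Equiv.refl_apply, extremalGraph_adj hij]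
    have : k * 2 ≤ k * B := Nat.mul_le_mul_left k hB
    left
    omega
  refine ⟨({i | IsParent k s m i j} : Finset (Fin n)), card_filter_isParent hm hn j (by omega),
    fun i hi => (mem_filter.1 hi).2.lt, fun i hij => ?_, fun i hi i' hi' hne => ?_⟩
  · simp [extremalGraph_adj hij]
  · simp only [mem_filter, mem_univ, true_and] at hi hi'
    simp only [Equiv.refl_symm, Equiv.refl_apply]
    rcases hne.lt_or_gt with hlt | hgt
    · exact (extremalGraph_adj hlt).2 (hi.isParent_of_lt hi' hlt)
    · exact ((extremalGraph_adj hgt).2 (hi'.isParent_of_lt hi hgt)).symm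

lemma treewidth_extremalGraph (hm : m = k * B + r) (hn : n = m + s * B) (hB : 2 ≤ B)
    (hkn : k + 1 ≤ n) : treewidth (extremalGraph k s m n) = k :=
  (isKTree_extremalGraph hm hn hB hkn).treewidth_eq

lemma le_degN_extremalGraph (hm : m = k * B + r) (hn : n = m + s * B) (v : Fin n)
    (hkv : k ≤ (v : ℕ)) (hvB : (v : ℕ) + k < k * B) :
    2 * k + s ≤ degN (extremalGraph k s m n) v := by
  have hk : 0 < k := Nat.pos_of_ne_zero (by rintro rfl; simp at hvB)
  obtain ⟨g, hg⟩ : ∃ g, g = (v : ℕ) / k := ⟨_, rfl⟩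
  have hgv : k * g ≤ v ∧ (v : ℕ) < k * g + k := by
    have := Nat.mod_lt (v : ℕ) hk
    have := Nat.div_add_mod (v : ℕ) k
    rw [← hg] at this
    omega
  have hgB : g + 1 ≤ B := by
    by_contra! h
    nlinarith
  have hsg : s * g + s ≤ s * B := by nlinarith
  -- the `k` path neighbours on either side of `v`, and the leaves of the block containing `v`
  set T : Finset ℕ := (Ico (v - k) v ∪ Ioc (v : ℕ) (v + k)) ∪ Ico (m + s * g) (m + s * g + s)
  have hTcard : #T = 2 * k + s := by
    rw [card_union_of_disjoint, card_union_of_disjoint, Nat.card_Ico, Nat.card_Ioc, Nat.card_Ico]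
    · omega
    · exact disjoint_left.2 fun x hx hy => by simp only [mem_Ico, mem_Ioc] at hx hy; omega
    · exact disjoint_left.2 fun x hx hy => by
        simp only [mem_union, mem_Ico, mem_Ioc] at hx hy; omega
  have hT : ∀ x ∈ T, x < n := fun x hx => by
    simp only [T, mem_union, mem_Ico, mem_Ioc] at hx
    omega
  have hadj : ∀ w : Fin n, (w : ℕ) ∈ T → (extremalGraph k s m n).Adj v w := fun w hw => by
    simp only [T, mem_union, mem_Ico, mem_Ioc] at hw
    rcases hw with (hw | hw) | hw
    · exact ((extremalGraph_adj (Fin.lt_def.2 hw.2)).2 (Or.inl (by omega))).symm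
    · exact (extremalGraph_adj (Fin.lt_def.2 hw.1)).2 (Or.inl (by omega))
    · have hs : 0 < s := by omega
      have hwg : ((w : ℕ) - m) / s = g :=
        Nat.div_eq_of_lt_le (by rw [mul_comm]; omega) (by rw [add_mul, one_mul, mul_comm]; omega)
      refine (extremalGraph_adj (Fin.lt_def.2 (by omega))).2 (Or.inr ?_)
      rw [hwg]
      omega
  rw [degN_eq_card_filter, ← hTcard, ← card_filter_val_mem hT]
  exact card_le_card fun w hw => by
    simp only [mem_filter, mem_univ, true_and] at hw ⊢
    exact hadj w hw

lemma card_degN_extremalGraph_le (hm : m = k * B + r) (hn : n = m + s * B) {d : ℕ}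
    (hd : d < 2 * k + s) :
    #{v | degN (extremalGraph k s m n) v ≤ d} ≤ s * B + r + 2 * k := by
  have hsub : ({v | degN (extremalGraph k s m n) v ≤ d} : Finset (Fin n)) ⊆
      ({v | (v : ℕ) ∉ Ico k (k * B - k)} : Finset (Fin n)) := fun v hv => by
    simp only [mem_filter, mem_univ, true_and, mem_Ico] at hv ⊢
    intro hvI
    have := le_degN_extremalGraph hm hn v hvI.1 (by omega)
    omega
  have hint : #{v : Fin n | (v : ℕ) ∈ Ico k (k * B - k)} = k * B - k - k := by
    rw [card_filter_val_mem fun x hx => by rw [mem_Ico] at hx; omega, Nat.card_Ico]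
  have := card_filter_add_card_filter_not (s := (univ : Finset (Fin n)))
    (fun v : Fin n => (v : ℕ) ∈ Ico k (k * B - k))
  have := card_le_card hsub
  simp only [card_univ, Fintype.card_fin] at *
  omega

end Construction

def lowDegreeCounts (k d n : ℕ) : Set ℕ :=
  {c | ∃ G : SimpleGraph (Fin n), treewidth G = k ∧ {v : Fin n | degN G v ≤ d}.ncard = c}

section LowDegreeCounts

variable {k d n c : ℕ}

lemma ncard_setOf_eq_card_filter {V : Type*} [Fintype V] (p : V → Prop) [DecidablePred p] :
    {v | p v}.ncard = #{v | p v} := by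
  rw [Set.ncard_eq_toFinset_card']
  congr 1
  ext
  simp

lemma sub_mul_le_mul_of_mem_lowDegreeCounts (hn : 0 < n) (hc : c ∈ lowDegreeCounts k d n) :
    (d + 1 - 2 * k) * n ≤ (d + 1 - k) * c := by
  obtain ⟨G, rfl, rfl⟩ := hc
  have : Nonempty (Fin n) := ⟨⟨0, hn⟩⟩
  simpa [ncard_setOf_eq_card_filter] using sub_mul_card_le_mul_card_degN_le G d

lemma exists_mem_lowDegreeCounts_mul_le (hd : 2 * k ≤ d + 1) (hn : 2 * (d + 1 - k) ≤ n) :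
    ∃ c ∈ lowDegreeCounts k d n,
      (d + 1 - k) * c ≤ (d + 1 - 2 * k) * n + 3 * (d + 1 - k) ^ 2 := by
  set P := d + 1 - k
  set s := d + 1 - 2 * k
  have hP : 0 < P := by omega
  have hdiv := Nat.div_add_mod n P
  have hB : 2 ≤ n / P := (Nat.le_div_iff_mul_le hP).2 hn
  have hr := Nat.mod_lt n hP
  have hsplit : P * (n / P) = k * (n / P) + s * (n / P) := by rw [← add_mul]; congr 1; omega
  refine ⟨_, ⟨extremalGraph k s (k * (n / P) + n % P) n,
    treewidth_extremalGraph rfl (by omega) hB (by omega), rfl⟩, ?_⟩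
  rw [ncard_setOf_eq_card_filter]
  have hcount := card_degN_extremalGraph_le (d := d) rfl
    (show n = k * (n / P) + n % P + s * (n / P) by omega) (by omega)
  calc P * _ ≤ P * (s * (n / P) + n % P + 2 * k) := Nat.mul_le_mul_left P hcount
    _ ≤ s * (P * (n / P)) + P * (3 * P) := by
      rw [mul_add, mul_left_comm]
      have : n % P + 2 * k ≤ 3 * P := by omega
      nlinarith
    _ ≤ s * n + 3 * P ^ 2 := by
      have : P * (n / P) ≤ n := Nat.mul_div_le n P
      nlinarith

end LowDegreeCounts

open Filter Topology in
lemma tendsto_div_of_le_of_le {a : ℕ → ℝ} {c C : ℝ}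
    (h : ∀ᶠ n in atTop, c * n ≤ a n ∧ a n ≤ c * n + C) :
    Tendsto (fun n : ℕ => a n / n) atTop (𝓝 c) := by
  have hC : Tendsto (fun n : ℕ => c + C / n) atTop (𝓝 c) := by
    simpa using tendsto_const_nhds.add (tendsto_const_div_atTop_nhds_zero_nat C)
  refine tendsto_of_tendsto_of_tendsto_of_le_of_le' tendsto_const_nhds hC ?_ ?_
  · filter_upwards [h, eventually_gt_atTop 0] with n hn hpos
    rw [le_div_iff₀ (by positivity)]
    exact hn.1
  · filter_upwards [h, eventually_gt_atTop 0] with n hn hpos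
    rw [div_le_iff₀ (by positivity), add_mul, div_mul_cancel₀ _ (by positivity)]
    exact hn.2

/-- For integers `k ≥ 0` and `d ≥ 2k-1`, letting `f n` be the minimum over all
`n`-vertex graphs `G` of treewidth exactly `k` of the number of vertices of `G` of degree at
most `d`, the sequence `f n / n` converges to `(d-2k+1)/(d-k+1)`. -/
theorem stmt1 (k d : ℕ) (hd : 2 * k ≤ d + 1) :
    Filter.Tendsto
      (fun n : ℕ =>
        ((sInf {m : ℕ | ∃ G : SimpleGraph (Fin n),
            treewidth G = k ∧ {v : Fin n | degN G v ≤ d}.ncard = m} : ℕ) : ℝ) / n)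
      Filter.atTop
      (nhds (((d : ℝ) - 2 * k + 1) / ((d : ℝ) - k + 1))) := by
  change Filter.Tendsto (fun n : ℕ => ((sInf (lowDegreeCounts k d n) : ℕ) : ℝ) / n) _ _
  set P := d + 1 - k
  set s := d + 1 - 2 * k
  have hP : (0 : ℝ) < P := Nat.cast_pos.2 (by omega)
  have hlim : ((d : ℝ) - 2 * k + 1) / ((d : ℝ) - k + 1) = s / P := by
    simp only [s, P]
    push_cast [Nat.cast_sub hd, Nat.cast_sub (show k ≤ d + 1 by omega)]
    ring
  rw [hlim]
  refine tendsto_div_of_le_of_le (C := 3 * P) ?_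
  filter_upwards [Filter.eventually_ge_atTop (2 * P)] with n hn
  obtain ⟨c, hc, hcP⟩ := exists_mem_lowDegreeCounts_mul_le hd hn
  have hlow : s * n ≤ P * sInf (lowDegreeCounts k d n) :=
    sub_mul_le_mul_of_mem_lowDegreeCounts (by omega) (Nat.sInf_mem ⟨c, hc⟩)
  have hup : P * sInf (lowDegreeCounts k d n) ≤ s * n + 3 * P ^ 2 :=
    (Nat.mul_le_mul_left P (Nat.sInf_le hc)).trans hcP
  constructor
  · rw [div_mul_eq_mul_div, div_le_iff₀ hP, mul_comm _ (P : ℝ)]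
    exact_mod_cast hlow
  · rw [div_mul_eq_mul_div, div_add' _ _ _ hP.ne', le_div_iff₀ hP, mul_comm _ (P : ℝ)]
    exact_mod_cast (by linarith [hup] : P * sInf (lowDegreeCounts k d n) ≤ s * n + 3 * P * P)
end

section
/- Let G be a k-tree on n ≥ 2k+1 vertices, and let (u_1, u_2, …, u_q) be a clique of G ordered by degree, i.e., deg_G(u_i) ≤ deg_G(u_{i+1}) for all 1 ≤ i ≤ q-1. Then deg_G(u_i) ≥ k+i-1 for all 1 ≤ i ≤ q. -/
/-!
Fix a construction order of the `k`-tree and call a vertex universal for the first `j` vertices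
if it is adjacent to all others among them. Universal vertices together with the `k`-clique `S`
to which vertex `j` is attached form a clique, and cliques of a `k`-tree have at most `k + 1`
vertices, so vertex `j` removes at most one vertex from the universal set: at least `2k + 2 - j`
vertices are universal for the first `j`. Hence a clique `C` inside the first `k + |C|` vertices
contains a universal vertex, of degree `k + |C| - 1` there; adding vertices one at a time keeps a
vertex of `C` with at least that many neighbours. For the clique `{u₁, …, uᵢ}` (so `i ≤ k + 1` and
`k + i ≤ n`) this gives some `uₘ`, `m ≤ i`, of degree at least `k + i - 1`, and the degree
ordering passes the bound on to `uᵢ`.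
-/

open Finset

namespace SimpleGraph

variable {n k : ℕ} (H : SimpleGraph (Fin n))

open scoped Classical in
noncomputable def neighborsBelow (v : Fin n) (j : ℕ) : Finset (Fin n) :=
  {w | (w : ℕ) < j ∧ H.Adj v w}

open scoped Classical in
noncomputable def universalBelow (j : ℕ) : Finset (Fin n) :=
  {v | (v : ℕ) < j ∧ ∀ w : Fin n, (w : ℕ) < j → w ≠ v → H.Adj v w}

variable {H}

@[simp]
theorem mem_neighborsBelow {v w : Fin n} {j : ℕ} :
    w ∈ H.neighborsBelow v j ↔ (w : ℕ) < j ∧ H.Adj v w := by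
  simp [neighborsBelow]

@[simp]
theorem mem_universalBelow {v : Fin n} {j : ℕ} :
    v ∈ H.universalBelow j ↔ (v : ℕ) < j ∧ ∀ w : Fin n, (w : ℕ) < j → w ≠ v → H.Adj v w := by
  simp [universalBelow]

theorem neighborsBelow_mono {v : Fin n} {j j' : ℕ} (h : j ≤ j') :
    H.neighborsBelow v j ⊆ H.neighborsBelow v j' := fun w hw => by
  rw [mem_neighborsBelow] at hw ⊢
  exact ⟨hw.1.trans_le h, hw.2⟩

theorem card_neighborsBelow_of_mem_universalBelow {v : Fin n} {j : ℕ}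
    (hv : v ∈ H.universalBelow j) (hjn : j ≤ n) : #(H.neighborsBelow v j) + 1 = j := by
  rw [mem_universalBelow] at hv
  have : H.neighborsBelow v j = ({w : Fin n | (w : ℕ) < j} : Finset (Fin n)).erase v := by
    ext w
    simp only [mem_neighborsBelow, mem_erase, mem_filter, mem_univ, true_and]
    exact ⟨fun h => ⟨(H.ne_of_adj h.2).symm, h.1⟩, fun h => ⟨h.2, hv.2 w h.2 h.1⟩⟩
  rw [this, card_erase_of_mem (by simpa using hv.1), Fin.card_filter_val_lt, min_eq_right hjn]
  have : 0 < j := (Nat.zero_le _).trans_lt hv.1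
  omega

variable (H k)

/-- The construction order of a `k`-tree, on `Fin n`: `neighborsBelow t t` is the `k`-clique to
which vertex `t` is attached. -/
structure IsKTreeOrder : Prop where
  adj_of_lt : ∀ i j : Fin n, i < j → (j : ℕ) < k + 1 → H.Adj i j
  card_neighborsBelow : ∀ t : Fin n, k + 1 ≤ (t : ℕ) → #(H.neighborsBelow t t) = k
  isClique_neighborsBelow :
    ∀ t : Fin n, k + 1 ≤ (t : ℕ) → H.IsClique (H.neighborsBelow t t : Set (Fin n))

variable {H k}

namespace IsKTreeOrder

variable (hH : H.IsKTreeOrder k)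
include hH

theorem card_le_of_isClique {s : Finset (Fin n)} (hs : H.IsClique (s : Set (Fin n))) :
    #s ≤ k + 1 := by
  obtain rfl | hne := s.eq_empty_or_nonempty
  · simp
  set m := s.max' hne
  by_cases hm : (m : ℕ) < k + 1
  · calc #s ≤ #({i : Fin n | (i : ℕ) < k + 1} : Finset (Fin n)) :=
          card_le_card fun v hv =>
            mem_filter.2 ⟨mem_univ _, (Fin.le_def.1 (s.le_max' v hv)).trans_lt hm⟩
      _ ≤ k + 1 := by rw [Fin.card_filter_val_lt]; exact min_le_right _ _
  · have hsub : s ⊆ insert m (H.neighborsBelow m m) := by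
      intro v hv
      rcases eq_or_ne v m with rfl | hvm
      · exact mem_insert_self _ _
      · exact mem_insert_of_mem (mem_neighborsBelow.2
          ⟨(s.le_max' v hv).lt_of_ne hvm, hs (s.max'_mem hne) hv hvm.symm⟩)
    calc #s ≤ #(insert m (H.neighborsBelow m m)) := card_le_card hsub
      _ ≤ k + 1 := (card_insert_le _ _).trans (by rw [hH.card_neighborsBelow m (by omega)])

theorem card_universalBelow {j : ℕ} (hkj : k + 1 ≤ j) (hjn : j ≤ n) :
    2 * k + 2 ≤ #(H.universalBelow j) + j := by
  induction j, hkj using Nat.le_induction with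
  | base =>
    have : H.universalBelow (k + 1) = ({i : Fin n | (i : ℕ) < k + 1} : Finset (Fin n)) := by
      ext v
      simp only [mem_universalBelow, mem_filter, mem_univ, true_and, and_iff_left_iff_imp]
      intro hv w hw hwv
      rcases lt_or_gt_of_ne hwv with h | h
      · exact (hH.adj_of_lt w v h hv).symm
      · exact hH.adj_of_lt v w h hw
    rw [this, Fin.card_filter_val_lt, min_eq_right hjn]
    omega
  | succ j hkj ih =>
    set t : Fin n := ⟨j, by omega⟩
    set U := H.universalBelow j
    set L := H.neighborsBelow t t
    have hclique : H.IsClique ((U ∪ L : Finset (Fin n)) : Set (Fin n)) := by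
      intro a ha b hb hab
      simp only [coe_union, Set.mem_union, mem_coe, U, L, mem_universalBelow,
        mem_neighborsBelow] at ha hb
      rcases ha with ha | ha
      · exact ha.2 b (hb.elim (·.1) (·.1)) hab.symm
      rcases hb with hb | hb
      · exact (hb.2 a ha.1 hab).symm
      · exact hH.isClique_neighborsBelow t hkj (mem_neighborsBelow.2 ha)
          (mem_neighborsBelow.2 hb) hab
    have hsub : U ∩ L ⊆ H.universalBelow (j + 1) := by
      intro v hv
      simp only [mem_inter, U, L, mem_universalBelow, mem_neighborsBelow] at hv ⊢
      refine ⟨by omega, fun w hw hwv => ?_⟩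
      rcases Nat.lt_succ_iff_lt_or_eq.1 hw with hw | hw
      · exact hv.1.2 w hw hwv
      · exact (Fin.ext hw : w = t) ▸ hv.2.2.symm
    have := card_union_add_card_inter U L
    have : #(U ∩ L) ≤ #(H.universalBelow (j + 1)) := card_le_card hsub
    have : #(U ∪ L) ≤ k + 1 := hH.card_le_of_isClique hclique
    have : #L = k := hH.card_neighborsBelow t hkj
    have : 2 * k + 2 ≤ #U + j := ih (by omega)
    omega

theorem exists_mem_universalBelow {C : Finset (Fin n)} (hC : H.IsClique (C : Set (Fin n)))
    {j : ℕ} (hCj : ∀ v ∈ C, (v : ℕ) < j) (hkj : k + 1 ≤ j) (hjC : j ≤ k + #C) (hjn : j ≤ n) :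
    ∃ v ∈ C, v ∈ H.universalBelow j := by
  have hclique : H.IsClique ((C ∪ H.universalBelow j : Finset (Fin n)) : Set (Fin n)) := by
    intro a ha b hb hab
    simp only [coe_union, Set.mem_union, mem_coe, mem_universalBelow] at ha hb
    rcases hb with hb | hb
    · rcases ha with ha | ha
      · exact hC ha hb hab
      · exact ha.2 b (hCj b hb) hab.symm
    · exact (hb.2 a (ha.elim (hCj a) (·.1)) hab).symm
  have := card_union_add_card_inter C (H.universalBelow j)
  have := hH.card_le_of_isClique hclique
  have := hH.card_universalBelow hkj hjn
  obtain ⟨v, hv⟩ := card_pos.1 (by omega : 0 < #(C ∩ H.universalBelow j))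
  exact ⟨v, (mem_inter.1 hv).1, (mem_inter.1 hv).2⟩

theorem exists_mem_card_neighborsBelow {C : Finset (Fin n)} (hC : H.IsClique (C : Set (Fin n)))
    (hne : C.Nonempty) {j : ℕ} (hCj : ∀ v ∈ C, (v : ℕ) < j) (hkj : k + #C ≤ j) (hjn : j ≤ n) :
    ∃ v ∈ C, k + #C ≤ #(H.neighborsBelow v j) + 1 := by
  induction j generalizing C with
  | zero =>
    obtain ⟨v, hv⟩ := hne
    exact absurd (hCj v hv) (Nat.not_lt_zero _)
  | succ j ih =>
    have hC1 : 1 ≤ #C := card_pos.2 hne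
    rcases hkj.eq_or_lt with hkj | hkj
    · obtain ⟨v, hvC, hv⟩ := hH.exists_mem_universalBelow hC hCj (by omega) hkj.ge hjn
      exact ⟨v, hvC, by rw [card_neighborsBelow_of_mem_universalBelow hv hjn]; omega⟩
    have hmono : ∀ v, #(H.neighborsBelow v j) ≤ #(H.neighborsBelow v (j + 1)) := fun v =>
      card_le_card (neighborsBelow_mono (by omega))
    by_cases hx : ∃ x ∈ C, (x : ℕ) = j
    swap
    · push Not at hx
      obtain ⟨v, hvC, hv⟩ := ih hC hne
        (fun v hv => (Nat.lt_succ_iff.1 (hCj v hv)).lt_of_ne (hx v hv)) (by omega) (by omega)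
      exact ⟨v, hvC, hv.trans (by have := hmono v; omega)⟩
    obtain ⟨x, hxC, hxj⟩ := hx
    have hCx : #(C.erase x) + 1 = #C := card_erase_add_one hxC
    obtain hCx_empty | hCx_ne := (C.erase x).eq_empty_or_nonempty
    · rw [hCx_empty, card_empty] at hCx
      have := hH.card_neighborsBelow x (by omega)
      have := hmono x
      have := card_le_card (neighborsBelow_mono (H := H) (v := x) (by omega : (x : ℕ) ≤ j))
      exact ⟨x, hxC, by omega⟩
    · have hCx_lt : ∀ v ∈ C.erase x, (v : ℕ) < j := fun v hv =>
        (Nat.lt_succ_iff.1 (hCj v (mem_of_mem_erase hv))).lt_of_ne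
          fun h => ne_of_mem_erase hv (Fin.ext (h.trans hxj.symm))
      obtain ⟨v, hvC, hv⟩ := ih (hC.subset (by simp)) hCx_ne hCx_lt (by omega) (by omega)
      have hxv : x ∉ H.neighborsBelow v j := by simp [hxj]
      have hsub : insert x (H.neighborsBelow v j) ⊆ H.neighborsBelow v (j + 1) :=
        insert_subset (mem_neighborsBelow.2 ⟨by omega, hC (mem_of_mem_erase hvC) hxC
          (ne_of_mem_erase hvC)⟩) (neighborsBelow_mono (by omega))
      have := card_le_card hsub
      rw [card_insert_of_notMem hxv] at this
      exact ⟨v, mem_of_mem_erase hvC, by omega⟩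

end IsKTreeOrder

end SimpleGraph

open SimpleGraph

theorem IsKTree.exists_isKTreeOrder {V : Type*} {k : ℕ} {G : SimpleGraph V} (hG : IsKTree k G) :
    ∃ (n : ℕ) (e : V ≃ Fin n), (G.comap e.symm).IsKTreeOrder k := by
  obtain ⟨n, e, -, hinit, hstep⟩ := hG
  have hbelow : ∀ t : Fin n, k + 1 ≤ (t : ℕ) → ∃ S : Finset (Fin n),
      (G.comap e.symm).neighborsBelow t t = S ∧ #S = k ∧
        (G.comap e.symm).IsClique (S : Set (Fin n)) := by
    intro t ht
    obtain ⟨S, hScard, hSlt, hSadj, hSclique⟩ := hstep t ht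
    refine ⟨S, ?_, hScard, fun a ha b hb hab => hSclique a ha b hb hab⟩
    ext i
    rw [mem_neighborsBelow, comap_adj]
    exact ⟨fun h => (hSadj i h.1).1 h.2.symm, fun h => ⟨hSlt i h, ((hSadj i (hSlt i h)).2 h).symm⟩⟩
  refine ⟨n, e, hinit, fun t ht => ?_, fun t ht => ?_⟩
  · obtain ⟨S, hS, hScard, -⟩ := hbelow t ht
    rwa [hS]
  · obtain ⟨S, hS, -, hSclique⟩ := hbelow t ht
    rwa [hS]

theorem card_neighborsBelow_comap_le_degN {V : Type*} {n : ℕ} (G : SimpleGraph V) (e : V ≃ Fin n)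
    (x : V) (j : ℕ) : #((G.comap e.symm).neighborsBelow (e x) j) ≤ degN G x := by
  have : Finite V := Finite.of_equiv _ e.symm
  rw [degN, ← card_map e.symm.toEmbedding, ← Set.ncard_coe_finset]
  refine Set.ncard_le_ncard (fun y hy => ?_) (Set.toFinite _)
  obtain ⟨w, hw, rfl⟩ := mem_map.1 hy
  simpa using (mem_neighborsBelow.1 hw).2

/-- Let `G` be a `k`-tree on `n ≥ 2k+1` vertices and let `u 0, …, u (q-1)`
be a clique of `G` ordered by degree. Then (with 0-indexing) `deg (u i) ≥ k + i` for all `i`. -/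
theorem stmt6 {V : Type*} [Fintype V] (k q : ℕ) (G : SimpleGraph V)
    (hG : IsKTree k G) (hn : 2 * k + 1 ≤ Fintype.card V)
    (u : Fin q → V) (hinj : Function.Injective u)
    (hclique : ∀ i j : Fin q, i ≠ j → G.Adj (u i) (u j))
    (hord : ∀ i j : Fin q, i ≤ j → degN G (u i) ≤ degN G (u j)) :
    ∀ i : Fin q, k + (i : ℕ) ≤ degN G (u i) := by
  intro i
  obtain ⟨n, e, hH⟩ := hG.exists_isKTreeOrder
  have hcard : Fintype.card V = n := by simpa using Fintype.card_congr e
  set C := (Iic i).map ⟨e ∘ u, e.injective.comp hinj⟩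
  have hC : (G.comap e.symm).IsClique (C : Set (Fin n)) := by
    intro a ha b hb hab
    obtain ⟨a, -, rfl⟩ := mem_map.1 ha
    obtain ⟨b, -, rfl⟩ := mem_map.1 hb
    simpa using hclique a b (fun h => hab (h ▸ rfl))
  have hCcard : #C = i + 1 := by simp [C]
  have hCk : #C ≤ k + 1 := hH.card_le_of_isClique hC
  obtain ⟨v, hvC, hv⟩ := hH.exists_mem_card_neighborsBelow hC
    ⟨e (u i), mem_map_of_mem _ (mem_Iic.2 le_rfl)⟩ (fun v _ => v.isLt) (by omega) le_rfl
  obtain ⟨m, hmi, rfl⟩ := mem_map.1 hvC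
  change k + #C ≤ #((G.comap e.symm).neighborsBelow (e (u m)) n) + 1 at hv
  calc k + (i : ℕ) ≤ #((G.comap e.symm).neighborsBelow (e (u m)) n) := by omega
    _ ≤ degN G (u m) := card_neighborsBelow_comap_le_degN G e (u m) n
    _ ≤ degN G (u i) := hord m i (mem_Iic.1 hmi)
end

section
/- For all integers 1 ≤ k ≤ ℓ ≤ 2k, and for every k-tree G on n ≥ ℓ+2 vertices, the subgraph G_ℓ of G induced by the set of vertices of degree at most ℓ has treewidth at most ℓ-k. -/
/-!
Number the vertices of the `k`-tree `G` in construction order. The earlier neighbours of every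
vertex form a clique, hence so do its earlier neighbours inside `G_ℓ`. A graph with such an
ordering, whose earlier-neighbour cliques have at most `d` vertices, is a spanning subgraph of a
`d`-tree as soon as it has `d + 1` vertices: add the vertices in order and enlarge each
earlier-neighbour clique to a `d`-clique of the `d`-tree built so far. For `d = ℓ - k`, the last
`ℓ - k + 1` vertices of `G` have degree at most `ℓ`.

For the clique bound, induction along the construction order shows that every nonempty clique `C`
of `G` has a vertex of degree at least `min (k + |C| - 1) (n - 1)`; since `n - 1 > ℓ`, a clique of
vertices of degree at most `ℓ` has at most `ℓ + 1 - k` vertices. The saturated case of the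
induction uses that a clique `C` among the first `m` vertices contains at least `|C| - (m - k - 1)`
vertices adjacent to all of the first `m`.
-/

open Finset

namespace SimpleGraph

open scoped Classical

noncomputable def backNbrs (G : SimpleGraph ℕ) (j : ℕ) : Finset ℕ := {i ∈ range j | G.Adj i j}

noncomputable def prefixDegree (G : SimpleGraph ℕ) (m a : ℕ) : ℕ := #{b ∈ range m | G.Adj a b}

/-- `G` lives on `{0, …, n-1}` and arises by adding `0, 1, …, n-1` in turn, each `j` joined to a
clique of `min j k` earlier vertices. For `k < n` these are exactly the `k`-trees together with a
construction order (`IsKTree.exists_isOrderedKTree`, `IsOrderedKTree.isKTree_of_map`). -/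
structure IsOrderedKTree (k n : ℕ) (G : SimpleGraph ℕ) : Prop where
  lt_of_adj : ∀ {a b}, G.Adj a b → b < n
  isClique_backNbrs : ∀ j < n, G.IsClique (G.backNbrs j)
  card_backNbrs : ∀ j < n, #(G.backNbrs j) = min j k

variable {G : SimpleGraph ℕ} {k n m a b i j : ℕ} {C : Finset ℕ}

@[simp]
theorem mem_backNbrs : i ∈ G.backNbrs j ↔ i < j ∧ G.Adj i j := by
  simp [backNbrs]

theorem prefixDegree_succ (G : SimpleGraph ℕ) (m a : ℕ) :
    G.prefixDegree (m + 1) a = G.prefixDegree m a + if G.Adj a m then 1 else 0 := by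
  unfold prefixDegree
  rw [range_add_one, filter_insert]
  split_ifs with h
  · rw [card_insert_of_notMem (by simp)]
  · rfl

theorem prefixDegree_mono {m m' : ℕ} (G : SimpleGraph ℕ) (a : ℕ) (h : m ≤ m') :
    G.prefixDegree m a ≤ G.prefixDegree m' a :=
  card_le_card (filter_subset_filter _ (range_subset_range.2 h))

theorem prefixDegree_add_one_of_dominates (ha : a < m) (h : ∀ b < m, b ≠ a → G.Adj a b) :
    G.prefixDegree m a + 1 = m := by
  have : {b ∈ range m | G.Adj a b} = (range m).erase a := by
    ext b
    simp only [mem_filter, mem_erase, mem_range]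
    exact ⟨fun ⟨hb, hab⟩ => ⟨hab.ne', hb⟩, fun ⟨hba, hb⟩ => ⟨hb, h b hb hba⟩⟩
  rw [prefixDegree, this, card_erase_of_mem (mem_range.2 ha), card_range]
  omega

theorem subset_insert_backNbrs (hC : G.IsClique C) (hj : j ∈ C) (hmax : ∀ i ∈ C, i ≤ j) :
    C ⊆ insert j (G.backNbrs j) := by
  intro i hi
  rcases eq_or_ne i j with rfl | hij
  · exact mem_insert_self _ _
  · exact mem_insert_of_mem (mem_backNbrs.2 ⟨(hmax i hi).lt_of_ne hij, hC hi hj hij⟩)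

theorem card_backNbrs_le_prefixDegree (G : SimpleGraph ℕ) (m : ℕ) :
    #(G.backNbrs m) ≤ G.prefixDegree (m + 1) m :=
  card_le_card fun _ hi => mem_filter.2
    ⟨mem_range.2 ((mem_backNbrs.1 hi).1.trans (Nat.lt_add_one m)), (mem_backNbrs.1 hi).2.symm⟩

theorem dominates_succ (h : ∀ b < m, b ≠ a → G.Adj a b) (ham : G.Adj a m) :
    ∀ b < m + 1, b ≠ a → G.Adj a b :=
  fun b hb hba => (Nat.lt_succ_iff_lt_or_eq.1 hb).elim (h b · hba) (· ▸ ham)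

def attachVertex (G : SimpleGraph ℕ) (E : Finset ℕ) (m : ℕ) : SimpleGraph ℕ :=
  G ⊔ fromRel fun a b => a ∈ E ∧ b = m

theorem attachVertex_adj {E : Finset ℕ} :
    (G.attachVertex E m).Adj a b ↔ G.Adj a b ∨ a ≠ b ∧ (a ∈ E ∧ b = m ∨ b ∈ E ∧ a = m) := by
  simp [attachVertex]

theorem backNbrs_attachVertex_of_lt {E : Finset ℕ} (hj : j < m) :
    (G.attachVertex E m).backNbrs j = G.backNbrs j := by
  ext i
  simp only [mem_backNbrs, attachVertex_adj]
  constructor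
  · rintro ⟨hij, h | ⟨-, ⟨-, rfl⟩ | ⟨-, rfl⟩⟩⟩ <;> first | exact ⟨hij, h⟩ | omega
  · exact fun ⟨hij, h⟩ => ⟨hij, Or.inl h⟩

namespace IsOrderedKTree

variable (hG : G.IsOrderedKTree k n)
include hG

theorem backNbrs_eq_empty (hj : n ≤ j) : G.backNbrs j = ∅ :=
  eq_empty_of_forall_notMem fun i hi => by
    have := hG.lt_of_adj (mem_backNbrs.1 hi).2; omega

theorem card_backNbrs_le (j : ℕ) : #(G.backNbrs j) ≤ k := by
  rcases lt_or_ge j n with hj | hj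
  · exact hG.card_backNbrs j hj ▸ min_le_right _ _
  · simp [hG.backNbrs_eq_empty hj]

theorem backNbrs_eq_range (hj : j < n) (hjk : j ≤ k) : G.backNbrs j = range j :=
  eq_of_subset_of_card_le (fun i hi => mem_range.2 (mem_backNbrs.1 hi).1)
    (by rw [hG.card_backNbrs j hj, card_range]; omega)

theorem isClique_insert_backNbrs (hj : j < n) :
    G.IsClique (insert j (G.backNbrs j) : Finset ℕ) := by
  rw [coe_insert, isClique_insert]
  exact ⟨hG.isClique_backNbrs j hj, fun i hi _ => (mem_backNbrs.1 hi).2.symm⟩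

theorem adj_of_lt (hij : i < j) (hj : j < n) (hjk : j ≤ k) : G.Adj i j :=
  (mem_backNbrs.1 (hG.backNbrs_eq_range hj hjk ▸ mem_range.2 hij)).2

theorem isClique_range (hm : m ≤ n) (hmk : m ≤ k + 1) : G.IsClique (range m : Finset ℕ) := by
  intro i hi i' hi' hii'
  simp only [coe_range, Set.mem_Iio] at hi hi'
  rcases hii'.lt_or_gt with h | h
  · exact hG.adj_of_lt h (by omega) (by omega)
  · exact (hG.adj_of_lt h (by omega) (by omega)).symm

theorem card_le_of_isClique (hC : G.IsClique C) : #C ≤ k + 1 := by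
  rcases C.eq_empty_or_nonempty with rfl | hne
  · simp
  calc #C ≤ #(insert (C.max' hne) (G.backNbrs (C.max' hne))) :=
        card_le_card (subset_insert_backNbrs hC (C.max'_mem hne) (C.le_max' · ·))
    _ ≤ k + 1 := (card_insert_le _ _).trans (by have := hG.card_backNbrs_le (C.max' hne); omega)

theorem prefixDegree_le (ha : a < n) : G.prefixDegree n a ≤ k + (n - 1 - a) := by
  have hsub : {b ∈ range n | G.Adj a b} ⊆ G.backNbrs a ∪ Ioo a n := by
    intro b hb
    obtain ⟨hbn, hab⟩ := mem_filter.1 hb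
    rcases lt_trichotomy b a with h | rfl | h
    · exact mem_union_left _ (mem_backNbrs.2 ⟨h, hab.symm⟩)
    · exact absurd hab (G.loopless.irrefl _)
    · exact mem_union_right _ (mem_Ioo.2 ⟨h, mem_range.1 hbn⟩)
  calc G.prefixDegree n a ≤ #(G.backNbrs a ∪ Ioo a n) := card_le_card hsub
    _ ≤ #(G.backNbrs a) + #(Ioo a n) := card_union_le _ _
    _ ≤ k + (n - 1 - a) := by rw [Nat.card_Ioo]; have := hG.card_backNbrs_le a; omega

theorem prefixDegree_eq_ncard (a : ℕ) : G.prefixDegree n a = (G.neighborSet a).ncard := by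
  rw [prefixDegree, ← Set.ncard_coe_finset]
  congr 1
  ext b
  simpa using fun h => hG.lt_of_adj h

theorem eq_of_dominates_of_notMem_backNbrs (hkm : k ≤ m) (hm : m < n) (hb : b < m)
    (hda : ∀ c < m, c ≠ a → G.Adj a c) (hdb : ∀ c < m, c ≠ b → G.Adj b c)
    (haS : a ∉ G.backNbrs m) (hbS : b ∉ G.backNbrs m) : a = b := by
  by_contra hab
  have hcl : G.IsClique (insert a (insert b (G.backNbrs m)) : Finset ℕ) := by
    rw [coe_insert, coe_insert, isClique_insert, isClique_insert]
    refine ⟨⟨hG.isClique_backNbrs m hm, fun c hc hbc => hdb c (mem_backNbrs.1 hc).1 hbc.symm⟩, ?_⟩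
    rintro c (rfl | hc) hac
    · exact hda c hb hac.symm
    · exact hda c (mem_backNbrs.1 hc).1 hac.symm
  have := hG.card_le_of_isClique hcl
  rw [card_insert_of_notMem (by simp [hab, haS]), card_insert_of_notMem hbS,
    hG.card_backNbrs m hm] at this
  omega

/-- A vertex dominating `[0, m)` stays dominating in `[0, m]` unless it lies outside `backNbrs m`,
and two such vertices would extend `backNbrs m` to a `(k+2)`-clique. -/
theorem card_dominating_le_succ (hkm : k ≤ m) (hm : m < n) (hC : C ⊆ range m) :
    #{a ∈ C | ∀ b < m, b ≠ a → G.Adj a b} ≤ #{a ∈ C | ∀ b < m + 1, b ≠ a → G.Adj a b} + 1 := by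
  have hsplit : {a ∈ C | ∀ b < m, b ≠ a → G.Adj a b} ⊆
      {a ∈ C | ∀ b < m + 1, b ≠ a → G.Adj a b} ∪
        {a ∈ C | (∀ b < m, b ≠ a → G.Adj a b) ∧ a ∉ G.backNbrs m} := by
    intro a ha
    obtain ⟨haC, hda⟩ := mem_filter.1 ha
    by_cases haS : a ∈ G.backNbrs m
    · exact mem_union_left _ (mem_filter.2 ⟨haC, dominates_succ hda (mem_backNbrs.1 haS).2⟩)
    · exact mem_union_right _ (mem_filter.2 ⟨haC, hda, haS⟩)
  have hout : #{a ∈ C | (∀ b < m, b ≠ a → G.Adj a b) ∧ a ∉ G.backNbrs m} ≤ 1 := by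
    refine card_le_one.2 fun a ha b hb => ?_
    obtain ⟨-, hda, haS⟩ := mem_filter.1 ha
    obtain ⟨hbC, hdb, hbS⟩ := mem_filter.1 hb
    exact hG.eq_of_dominates_of_notMem_backNbrs hkm hm (mem_range.1 (hC hbC)) hda hdb haS hbS
  exact (card_le_card hsplit).trans ((card_union_le _ _).trans (by omega))

theorem card_le_card_dominating (hkm : k + 1 ≤ m) (hmn : m ≤ n) (hC : C ⊆ range m)
    (hcl : G.IsClique C) : #C ≤ m - (k + 1) + #{a ∈ C | ∀ b < m, b ≠ a → G.Adj a b} := by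
  induction m, hkm using Nat.le_induction generalizing C with
  | base =>
    rw [filter_true_of_mem fun a ha b hb hba =>
      hG.isClique_range hmn le_rfl (mem_range.2 hb) (hC ha) hba |>.symm]
    omega
  | succ m hkm ih =>
    by_cases hmC : m ∈ C
    · have hsub : {a ∈ C.erase m | ∀ b < m, b ≠ a → G.Adj a b} ⊆
          {a ∈ C | ∀ b < m + 1, b ≠ a → G.Adj a b} := by
        intro a ha
        obtain ⟨ha, hda⟩ := mem_filter.1 ha
        exact mem_filter.2 ⟨mem_of_mem_erase ha,
          dominates_succ hda (hcl (mem_of_mem_erase ha) hmC (ne_of_mem_erase ha))⟩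
      have := ih (by omega) (subset_insert_iff.1 (range_add_one ▸ hC))
        (hcl.subset (coe_subset.2 (erase_subset _ _)))
      have := card_le_card hsub
      have := card_erase_of_mem hmC
      have := card_pos.2 ⟨m, hmC⟩
      omega
    · have hCm : C ⊆ range m := (subset_insert_iff_of_notMem hmC).1 (range_add_one ▸ hC)
      have := ih (by omega) hCm hcl
      have := hG.card_dominating_le_succ (by omega) (by omega) hCm
      omega

theorem exists_dominating (hkm : k + 1 ≤ m) (hmn : m ≤ n) (hC : C ⊆ range m)
    (hcl : G.IsClique C) (hsat : m ≤ k + #C) : ∃ a ∈ C, ∀ b < m, b ≠ a → G.Adj a b := by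
  have := hG.card_le_card_dominating hkm hmn hC hcl
  obtain ⟨a, ha⟩ := card_pos.1 (show 0 < #{a ∈ C | ∀ b < m, b ≠ a → G.Adj a b} by omega)
  exact ⟨a, (mem_filter.1 ha).1, (mem_filter.1 ha).2⟩

theorem exists_min_le_prefixDegree (hkm : k + 1 ≤ m) (hmn : m ≤ n) (hC : C ⊆ range m)
    (hcl : G.IsClique C) (hne : C.Nonempty) :
    ∃ a ∈ C, min (k + #C) m ≤ G.prefixDegree m a + 1 := by
  induction m, hkm using Nat.le_induction generalizing C with
  | base =>
    obtain ⟨a, ha, hda⟩ := hG.exists_dominating le_rfl hmn hC hcl (by have := hne.card_pos; omega)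
    exact ⟨a, ha, by rw [prefixDegree_add_one_of_dominates (mem_range.1 (hC ha)) hda]; omega⟩
  | succ m hkm ih =>
    by_cases hsat : m + 1 ≤ k + #C
    · obtain ⟨a, ha, hda⟩ := hG.exists_dominating (by omega) hmn hC hcl hsat
      exact ⟨a, ha, by rw [prefixDegree_add_one_of_dominates (mem_range.1 (hC ha)) hda]; omega⟩
    by_cases hmC : m ∈ C
    · rcases (C.erase m).eq_empty_or_nonempty with hC' | hC'
      · have hC1 := card_erase_add_one hmC
        rw [hC', card_empty] at hC1
        have := G.card_backNbrs_le_prefixDegree m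
        rw [hG.card_backNbrs m (by omega)] at this
        exact ⟨m, hmC, by omega⟩
      · obtain ⟨a, ha, hda⟩ := ih (by omega) (subset_insert_iff.1 (range_add_one ▸ hC))
          (hcl.subset (coe_subset.2 (erase_subset _ _))) hC'
        have hadj : G.Adj a m := hcl (mem_of_mem_erase ha) hmC (ne_of_mem_erase ha)
        refine ⟨a, mem_of_mem_erase ha, ?_⟩
        rw [prefixDegree_succ, if_pos hadj]
        have := card_erase_of_mem hmC
        omega
    · have hCm : C ⊆ range m := (subset_insert_iff_of_notMem hmC).1 (range_add_one ▸ hC)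
      obtain ⟨a, ha, hda⟩ := ih (by omega) hCm hcl hne
      exact ⟨a, ha, by have := G.prefixDegree_mono a (Nat.le_add_right m 1); omega⟩

theorem card_add_le_of_prefixDegree_le {ℓ : ℕ} (hkn : k + 1 ≤ n) (hn : ℓ + 2 ≤ n)
    (hC : C ⊆ range n) (hcl : G.IsClique C) (hne : C.Nonempty)
    (hdeg : ∀ a ∈ C, G.prefixDegree n a ≤ ℓ) : #C + k ≤ ℓ + 1 := by
  obtain ⟨a, ha, hda⟩ := hG.exists_min_le_prefixDegree hkn le_rfl hC hcl hne
  have := hdeg a ha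
  omega

theorem backNbrs_attachVertex {E : Finset ℕ} (hE : E ⊆ range n) :
    (G.attachVertex E n).backNbrs n = E := by
  ext i
  simp only [mem_backNbrs, attachVertex_adj]
  constructor
  · rintro ⟨hin, h | ⟨-, ⟨hi, -⟩ | ⟨-, rfl⟩⟩⟩
    · exact absurd (hG.lt_of_adj h) (lt_irrefl n)
    · exact hi
    · omega
  · exact fun hi => ⟨mem_range.1 (hE hi), Or.inr ⟨(mem_range.1 (hE hi)).ne, by simp [hi]⟩⟩

theorem attachVertex {E : Finset ℕ} (hE : E ⊆ range n) (hcl : G.IsClique E)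
    (hcard : #E = min n k) : (G.attachVertex E n).IsOrderedKTree k (n + 1) where
  lt_of_adj {a b} h := by
    rcases attachVertex_adj.1 h with h | ⟨-, ⟨-, rfl⟩ | ⟨hb, -⟩⟩
    · exact (hG.lt_of_adj h).trans (Nat.lt_add_one n)
    · exact Nat.lt_add_one b
    · exact (mem_range.1 (hE hb)).trans (Nat.lt_add_one n)
  isClique_backNbrs j hj := by
    rcases Nat.lt_succ_iff_lt_or_eq.1 hj with hj | rfl
    · rw [backNbrs_attachVertex_of_lt hj]
      exact (hG.isClique_backNbrs j hj).mono le_sup_left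
    · rw [hG.backNbrs_attachVertex hE]
      exact hcl.mono le_sup_left
  card_backNbrs j hj := by
    rcases Nat.lt_succ_iff_lt_or_eq.1 hj with hj | rfl
    · rw [backNbrs_attachVertex_of_lt hj, hG.card_backNbrs j hj]
    · rw [hG.backNbrs_attachVertex hE, hcard]

theorem exists_isClique_superset (hC : C ⊆ range n) (hcl : G.IsClique C) (hCk : #C ≤ k) :
    ∃ E, C ⊆ E ∧ E ⊆ range n ∧ G.IsClique E ∧ #E = min n k := by
  rcases le_or_gt n k with hnk | hkn
  · exact ⟨range n, hC, subset_rfl, hG.isClique_range le_rfl (by omega), by simp [hnk]⟩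
  set j := (insert k C).max' (insert_nonempty k C)
  have hjmem : j ∈ insert k C := max'_mem _ _
  have hkj : k ≤ j := (insert k C).le_max' k (mem_insert_self k C)
  have hjn : j < n := by
    rcases mem_insert.1 hjmem with h | h
    · omega
    · exact mem_range.1 (hC h)
  have hCK : C ⊆ insert j (G.backNbrs j) := by
    intro c hc
    have hcj : c ≤ j := (insert k C).le_max' c (mem_insert_of_mem hc)
    rcases hcj.lt_or_eq with hcj | hcj
    · refine mem_insert_of_mem (mem_backNbrs.2 ⟨hcj, ?_⟩)
      by_cases hjC : j ∈ C
      · exact hcl hc hjC hcj.ne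
      · exact hG.adj_of_lt hcj hjn ((mem_insert.1 hjmem).resolve_right hjC).le
    · exact hcj ▸ mem_insert_self c _
  have hK : #(insert j (G.backNbrs j)) = k + 1 := by
    rw [card_insert_of_notMem (by simp), hG.card_backNbrs j hjn, min_eq_right hkj]
  obtain ⟨E, hCE, hEK, hE⟩ := exists_subsuperset_card_eq hCK hCk (by omega)
  refine ⟨E, hCE, fun i hi => ?_, (hG.isClique_insert_backNbrs hjn).subset (coe_subset.2 hEK),
    by rw [hE, min_eq_right hkn.le]⟩
  rcases mem_insert.1 (hEK hi) with rfl | hi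
  · exact mem_range.2 hjn
  · exact mem_range.2 ((mem_backNbrs.1 hi).1.trans hjn)

end IsOrderedKTree

/-- Vertex `M` is attached to a clique of size `min M k` containing its earlier `H`-neighbours. -/
theorem exists_isOrderedKTree_le (H : SimpleGraph ℕ) {k N : ℕ} (hH : ∀ {a b}, H.Adj a b → b < N)
    (hcl : ∀ j, H.IsClique (H.backNbrs j)) (hcard : ∀ j, #(H.backNbrs j) ≤ k) :
    ∃ T : SimpleGraph ℕ, T.IsOrderedKTree k N ∧ H ≤ T := by
  suffices ∀ M ≤ N, ∃ T : SimpleGraph ℕ, T.IsOrderedKTree k M ∧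
      ∀ {a b}, a < M → b < M → H.Adj a b → T.Adj a b by
    obtain ⟨T, hT, hHT⟩ := this N le_rfl
    exact ⟨T, hT, fun a b h => hHT (hH h.symm) (hH h) h⟩
  intro M
  induction M with
  | zero => exact fun _ => ⟨⊥, ⟨fun h => h.elim, by simp, by simp⟩, by simp⟩
  | succ M ih =>
    intro hMN
    obtain ⟨T, hT, hHT⟩ := ih (by omega)
    have hCM : H.backNbrs M ⊆ range M := fun i hi => mem_range.2 (mem_backNbrs.1 hi).1
    have hCcl : T.IsClique (H.backNbrs M) := fun i hi i' hi' hii' =>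
      hHT (mem_range.1 (hCM hi)) (mem_range.1 (hCM hi')) (hcl M hi hi' hii')
    obtain ⟨E, hCE, hEM, hEcl, hEcard⟩ := hT.exists_isClique_superset hCM hCcl (hcard M)
    refine ⟨T.attachVertex E M, hT.attachVertex hEM hEcl hEcard, fun {a b} ha hb hab => ?_⟩
    rw [attachVertex_adj]
    rcases Nat.lt_succ_iff_lt_or_eq.1 ha with ha | rfl <;>
      rcases Nat.lt_succ_iff_lt_or_eq.1 hb with hb | rfl
    · exact Or.inl (hHT ha hb hab)
    · exact Or.inr ⟨hab.ne, Or.inl ⟨hCE (mem_backNbrs.2 ⟨ha, hab⟩), rfl⟩⟩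
    · exact Or.inr ⟨hab.ne, Or.inr ⟨hCE (mem_backNbrs.2 ⟨hb, hab.symm⟩), rfl⟩⟩
    · exact absurd hab (H.loopless.irrefl _)

theorem coe_backNbrs_map {W : Type*} (H : SimpleGraph W) (g : W ↪ ℕ) (v : W) :
    ((H.map g).backNbrs (g v) : Set ℕ) = g '' {u | g u < g v ∧ H.Adj u v} := by
  ext a
  simp only [mem_coe, mem_backNbrs, map_adj, Set.mem_image]
  constructor
  · rintro ⟨ha, u, v', huv, rfl, hv'⟩
    obtain rfl := g.injective hv'
    exact ⟨u, ⟨ha, huv⟩, rfl⟩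
  · rintro ⟨u, ⟨huv, hadj⟩, rfl⟩
    exact ⟨huv, u, v, hadj, rfl, rfl⟩

theorem backNbrs_map_of_notMem_range {W : Type*} (H : SimpleGraph W) (g : W ↪ ℕ)
    (hj : j ∉ Set.range g) : (H.map g).backNbrs j = ∅ :=
  eq_empty_of_forall_notMem fun a ha => hj <| by
    obtain ⟨-, v, -, -, hv⟩ := (map_adj _ _ _ _).1 (mem_backNbrs.1 ha).2
    exact ⟨v, hv⟩

end SimpleGraph

open SimpleGraph

def Equiv.natEmbedding {V : Type*} {n : ℕ} (e : V ≃ Fin n) : V ↪ ℕ :=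
  e.toEmbedding.trans Fin.valEmbedding

@[simp]
theorem Equiv.natEmbedding_apply {V : Type*} {n : ℕ} (e : V ≃ Fin n) (v : V) :
    e.natEmbedding v = e v := rfl

section Transfer

open scoped Classical

variable {V : Type*} {G : SimpleGraph V} {k n : ℕ} {e : V ≃ Fin n}

theorem map_natEmbedding_adj (i j : Fin n) :
    (G.map e.natEmbedding).Adj i j ↔ G.Adj (e.symm i) (e.symm j) := by
  rw [← map_adj_apply (f := e.natEmbedding)]
  simp

theorem lt_of_map_natEmbedding_adj {a b : ℕ} (h : (G.map e.natEmbedding).Adj a b) : b < n := by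
  obtain ⟨-, v, -, -, rfl⟩ := (map_adj _ _ _ _).1 h
  exact (e v).isLt

theorem backNbrs_map_natEmbedding (j : Fin n) :
    (G.map e.natEmbedding).backNbrs j =
      (univ.filter fun i : Fin n => i < j ∧ G.Adj (e.symm i) (e.symm j)).map Fin.valEmbedding := by
  ext a
  simp only [mem_backNbrs, mem_map, mem_filter, mem_univ, true_and, Fin.valEmbedding_apply]
  constructor
  · rintro ⟨ha, hadj⟩
    have han : a < n := ha.trans j.isLt
    exact ⟨⟨a, han⟩, ⟨ha, (map_natEmbedding_adj ⟨a, han⟩ j).1 hadj⟩, rfl⟩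
  · rintro ⟨i, ⟨hij, hadj⟩, rfl⟩
    exact ⟨hij, (map_natEmbedding_adj i j).2 hadj⟩

theorem isClique_map_natEmbedding_iff {s : Finset (Fin n)} :
    (G.map e.natEmbedding).IsClique (s.map Fin.valEmbedding : Set ℕ) ↔
      ∀ i ∈ s, ∀ i' ∈ s, i ≠ i' → G.Adj (e.symm i) (e.symm i') := by
  simp only [IsClique, Set.Pairwise, coe_map, Set.mem_image, mem_coe, Fin.valEmbedding_apply]
  constructor
  · intro h i hi i' hi' hii'
    exact (map_natEmbedding_adj i i').1 (h ⟨i, hi, rfl⟩ ⟨i', hi', rfl⟩ (Fin.val_ne_of_ne hii'))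
  · rintro h _ ⟨i, hi, rfl⟩ _ ⟨i', hi', rfl⟩ hii'
    exact (map_natEmbedding_adj i i').2 (h i hi i' hi' (Fin.ne_of_val_ne hii'))

theorem IsKTree.exists_isOrderedKTree (hG : IsKTree k G) :
    ∃ (n : ℕ) (e : V ≃ Fin n), k + 1 ≤ n ∧ (G.map e.natEmbedding).IsOrderedKTree k n := by
  obtain ⟨n, e, hkn, hinit, hstep⟩ := hG
  refine ⟨n, e, hkn, ⟨lt_of_map_natEmbedding_adj, fun j hj => ?_, fun j hj => ?_⟩⟩ <;>
    obtain ⟨j, rfl⟩ : ∃ J : Fin n, (J : ℕ) = j := ⟨⟨j, hj⟩, rfl⟩ <;>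
    rw [backNbrs_map_natEmbedding]
  · rw [isClique_map_natEmbedding_iff]
    intro i hi i' hi' hii'
    simp only [mem_filter, mem_univ, true_and] at hi hi'
    rcases lt_or_ge (j : ℕ) (k + 1) with hjk | hjk
    · rcases lt_or_gt_of_ne hii' with h | h
      · exact hinit i i' h (by omega)
      · exact (hinit i' i h (by omega)).symm
    · obtain ⟨S, -, -, hiff, hS⟩ := hstep j hjk
      exact hS i ((hiff i hi.1).1 hi.2) i' ((hiff i' hi'.1).1 hi'.2) hii'
  · rw [card_map]
    rcases lt_or_ge (j : ℕ) (k + 1) with hjk | hjk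
    · rw [filter_congr fun i _ => and_iff_left_of_imp fun hij => hinit i j hij hjk,
        filter_gt_eq_Iio, Fin.card_Iio, min_eq_left (by omega)]
    · obtain ⟨S, hcard, hlt, hiff, -⟩ := hstep j hjk
      rw [show (univ.filter fun i : Fin n => i < j ∧ G.Adj (e.symm i) (e.symm j)) = S by
        ext i; simp only [mem_filter, mem_univ, true_and]
        exact ⟨fun h => (hiff i h.1).1 h.2, fun h => ⟨hlt i h, (hiff i (hlt i h)).2 h⟩⟩,
        hcard, min_eq_right (by omega)]

theorem SimpleGraph.IsOrderedKTree.isKTree_of_map (hG : (G.map e.natEmbedding).IsOrderedKTree k n)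
    (hkn : k + 1 ≤ n) : IsKTree k G := by
  refine ⟨n, e, hkn, fun i j hij hjk => ?_, fun j hjk => ?_⟩
  · rw [← map_natEmbedding_adj]
    exact hG.adj_of_lt hij j.isLt (by omega)
  · refine ⟨univ.filter fun i : Fin n => i < j ∧ G.Adj (e.symm i) (e.symm j), ?_, ?_, ?_, ?_⟩
    · rw [← card_map Fin.valEmbedding, ← backNbrs_map_natEmbedding,
        hG.card_backNbrs j j.isLt, min_eq_right (by omega)]
    · exact fun i hi => (mem_filter.1 hi).2.1
    · intro i hij
      simp [hij]
    · rw [← isClique_map_natEmbedding_iff, ← backNbrs_map_natEmbedding]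
      exact hG.isClique_backNbrs j j.isLt

end Transfer

theorem SimpleGraph.IsOrderedKTree.isKTree_comap {W : Type*} {T : SimpleGraph ℕ} {k n : ℕ}
    (hT : T.IsOrderedKTree k n) (hkn : k + 1 ≤ n) (q : W ≃ Fin n) :
    IsKTree k (T.comap q.natEmbedding) := by
  refine IsOrderedKTree.isKTree_of_map (e := q) ?_ hkn
  convert hT
  ext a b
  rw [map_adj]
  constructor
  · rintro ⟨u, v, h, rfl, rfl⟩
    exact h
  · intro h
    exact ⟨q.symm ⟨a, hT.lt_of_adj h.symm⟩, q.symm ⟨b, hT.lt_of_adj h⟩, by simpa using h,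
      by simp, by simp⟩

theorem treewidth_le_of_isClique_earlierNbrs {W : Type*} [Finite W] (H : SimpleGraph W)
    (r : W → ℕ) (hr : Function.Injective r) {d : ℕ} (hd : d + 1 ≤ Nat.card W)
    (hcl : ∀ v, H.IsClique {u | r u < r v ∧ H.Adj u v})
    (hcard : ∀ v, {u | r u < r v ∧ H.Adj u v}.ncard ≤ d) : treewidth H ≤ d := by
  have := Fintype.ofFinite W
  let : LinearOrder W := LinearOrder.lift' r hr
  let σ := Fintype.orderIsoFinOfCardEq W Nat.card_eq_fintype_card.symm
  set q : W ≃ Fin (Nat.card W) := σ.symm.toEquiv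
  have hq : ∀ v, {u | q.natEmbedding u < q.natEmbedding v ∧ H.Adj u v} =
      {u | r u < r v ∧ H.Adj u v} := fun v => by
    ext u
    exact and_congr_left' σ.symm.lt_iff_lt
  have hcl' : ∀ j, (H.map q.natEmbedding).IsClique ((H.map q.natEmbedding).backNbrs j) := by
    intro j
    by_cases hj : j ∈ Set.range q.natEmbedding
    · obtain ⟨v, rfl⟩ := hj
      rw [coe_backNbrs_map, hq]
      exact (hcl v).map
    · simp [backNbrs_map_of_notMem_range H _ hj]
  have hcard' : ∀ j, #((H.map q.natEmbedding).backNbrs j) ≤ d := by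
    intro j
    by_cases hj : j ∈ Set.range q.natEmbedding
    · obtain ⟨v, rfl⟩ := hj
      rw [← Set.ncard_coe_finset, coe_backNbrs_map, hq,
        Set.ncard_image_of_injective _ q.natEmbedding.injective]
      exact hcard v
    · simp [backNbrs_map_of_notMem_range H _ hj]
  obtain ⟨T, hT, hHT⟩ := exists_isOrderedKTree_le _ lt_of_map_natEmbedding_adj hcl' hcard'
  exact Nat.sInf_le ⟨T.comap q.natEmbedding, hT.isKTree_comap hd q,
    fun u v h => hHT (map_adj_apply.2 h)⟩

namespace SimpleGraph.IsOrderedKTree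

variable {V : Type*} {G : SimpleGraph V} {k n ℓ : ℕ} {e : V ≃ Fin n}
  (hG : (G.map e.natEmbedding).IsOrderedKTree k n)
include hG

theorem degN_eq_prefixDegree (v : V) :
    degN G v = (G.map e.natEmbedding).prefixDegree n (e v) := by
  rw [hG.prefixDegree_eq_ncard, ← e.natEmbedding_apply, neighborSet_map,
    Set.ncard_image_of_injective _ e.natEmbedding.injective, degN]

theorem isClique_earlierNbrs (v : V) : G.IsClique {u | (e u : ℕ) < e v ∧ G.Adj u v} := by
  intro u hu u' hu' huu'
  have hmem : ∀ {w}, w ∈ {u | (e u : ℕ) < e v ∧ G.Adj u v} →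
      e.natEmbedding w ∈ (G.map e.natEmbedding).backNbrs (e.natEmbedding v) :=
    fun hw => mem_backNbrs.2 ⟨hw.1, map_adj_apply.2 hw.2⟩
  exact map_adj_apply.1
    (hG.isClique_backNbrs _ (e v).isLt (hmem hu) (hmem hu') (e.natEmbedding.injective.ne huu'))

theorem isClique_earlierNbrs_induce (s : Set V) (v : s) :
    (G.induce s).IsClique {u | (e u : ℕ) < e v ∧ (G.induce s).Adj u v} :=
  fun _ hu _ hu' h => hG.isClique_earlierNbrs v hu hu' (Subtype.val_injective.ne h)

theorem ncard_add_le_of_degN_le [Finite V] (hkn : k + 1 ≤ n) (hn : ℓ + 2 ≤ n) {s : Set V}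
    (hs : G.IsClique s) (hne : s.Nonempty) (hdeg : ∀ v ∈ s, degN G v ≤ ℓ) :
    s.ncard + k ≤ ℓ + 1 := by
  obtain ⟨t, rfl⟩ := s.toFinite.exists_finset_coe
  rw [Set.ncard_coe_finset, ← card_map e.natEmbedding]
  refine hG.card_add_le_of_prefixDegree_le hkn hn ?_ (by rw [coe_map]; exact hs.map)
    (coe_nonempty.1 hne).map ?_
  · intro a ha
    obtain ⟨v, -, rfl⟩ := mem_map.1 ha
    exact mem_range.2 (e v).isLt
  · intro a ha
    obtain ⟨v, hv, rfl⟩ := mem_map.1 ha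
    rw [e.natEmbedding_apply, ← hG.degN_eq_prefixDegree]
    exact hdeg v hv

theorem ncard_earlierNbrs_induce_le [Finite V] (hkn : k + 1 ≤ n) (hn : ℓ + 2 ≤ n)
    (v : {v : V | degN G v ≤ ℓ}) :
    {u : {v : V | degN G v ≤ ℓ} |
      (e u : ℕ) < e v ∧ (G.induce {v | degN G v ≤ ℓ}).Adj u v}.ncard ≤ ℓ - k := by
  set A := {u : {v : V | degN G v ≤ ℓ} |
      (e u : ℕ) < e v ∧ (G.induce {v | degN G v ≤ ℓ}).Adj u v}
  have hvA : (v : V) ∉ Subtype.val '' A := by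
    rintro ⟨u, hu, huv⟩
    exact (Subtype.val_injective huv ▸ hu.1).false
  have hcl : G.IsClique (insert (v : V) (Subtype.val '' A)) := by
    rw [isClique_insert]
    refine ⟨(hG.isClique_earlierNbrs v).subset ?_, ?_⟩
    · rintro _ ⟨u, hu, rfl⟩
      exact hu
    · rintro _ ⟨u, hu, rfl⟩ -
      exact hu.2.symm
  have := hG.ncard_add_le_of_degN_le hkn hn hcl (Set.insert_nonempty _ _)
    (by rintro _ (rfl | ⟨u, -, rfl⟩); exacts [v.2, u.2])
  rw [Set.ncard_insert_of_notMem hvA, Set.ncard_image_of_injective _ Subtype.val_injective] at this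
  omega

theorem le_card_lowDegree [Finite V] (hkl : k ≤ ℓ) (hn : ℓ + 2 ≤ n) :
    ℓ - k + 1 ≤ Nat.card {v : V | degN G v ≤ ℓ} := by
  let late (i : Fin (ℓ - k + 1)) : V := e.symm ⟨n - 1 - i, by omega⟩
  have hlate : ∀ i, degN G (late i) ≤ ℓ := by
    intro i
    rw [hG.degN_eq_prefixDegree, Equiv.apply_symm_apply]
    refine (hG.prefixDegree_le (show n - 1 - i < n by omega)).trans ?_
    omega
  have hinj : Function.Injective fun i => (⟨late i, hlate i⟩ : {v : V | degN G v ≤ ℓ}) := by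
    intro i j h
    have := congrArg (fun v => (e v : ℕ)) (Subtype.ext_iff.1 h)
    simp only [late, Equiv.apply_symm_apply] at this
    omega
  have := Nat.card_le_card_of_injective _ hinj
  rwa [Nat.card_fin] at this

end SimpleGraph.IsOrderedKTree

theorem stmt8_general {V : Type*} [Fintype V] (k ℓ : ℕ) (hkl : k ≤ ℓ)
    (G : SimpleGraph V) (hG : IsKTree k G) (hn : ℓ + 2 ≤ Fintype.card V) :
    treewidth (G.induce {v : V | degN G v ≤ ℓ}) ≤ ℓ - k := by
  obtain ⟨n, e, hkn, hT⟩ := hG.exists_isOrderedKTree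
  rw [Fintype.card_congr e, Fintype.card_fin] at hn
  exact treewidth_le_of_isClique_earlierNbrs (G.induce {v | degN G v ≤ ℓ}) (fun v => (e v : ℕ))
    (fun _ _ h => Subtype.val_injective (e.injective (Fin.val_injective h)))
    (hT.le_card_lowDegree hkl hn) (hT.isClique_earlierNbrs_induce _)
    (hT.ncard_earlierNbrs_induce_le hkn hn)

/-- For all integers `1 ≤ k ≤ ℓ ≤ 2k` and every `k`-tree `G` on `n ≥ ℓ+2`
vertices, the subgraph of `G` induced by the vertices of degree at most `ℓ` has treewidth
at most `ℓ - k`. -/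
theorem stmt8 {V : Type*} [Fintype V] (k ℓ : ℕ) (hk : 1 ≤ k) (hkl : k ≤ ℓ) (hl : ℓ ≤ 2 * k)
    (G : SimpleGraph V) (hG : IsKTree k G) (hn : ℓ + 2 ≤ Fintype.card V) :
    treewidth (G.induce {v : V | degN G v ≤ ℓ}) ≤ ℓ - k :=
  stmt8_general k ℓ hkl G hG hn
end

section
/- Let d ≥ 2 and let T be a tree on n ≥ 5 vertices with α_d(T) = ((d-1)n+2)/(2d-1). Let L(T) be the set of leaves of T and P(T) the set of degree-2 vertices of T. Then |P(T)| ≥ |L(T)|. -/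
/-- `α_d(G)`: the maximum cardinality of a degree-`d` independent set of `G`. -/
noncomputable def alphaD {V : Type*} [Fintype V] (G : SimpleGraph V) (d : ℕ) : ℕ :=
  sSup {m : ℕ | ∃ S : Finset V,
    (∀ v ∈ S, ∀ w ∈ S, ¬ G.Adj v w) ∧ (∀ v ∈ S, degN G v ≤ d) ∧ S.card = m}


/-!
Call a vertex low if its degree is at most `d` and high otherwise; let `l` and `h` count the
leaves and the high vertices. In a tree `l = 2 + ∑ (deg v - 2)`, so `l ≥ (d - 1) h + 2`. The
leaves form a degree-`d` independent set, so `α_d ≥ l`, and so do the low vertices of each colour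
class of the bipartition, so `2 α_d ≥ n - h`. Hence
`(2d - 1) α_d = (d - 1) · 2 α_d + α_d ≥ (d - 1) n + 2`, and extremality forces equality
throughout: every low vertex has degree at most 2, and each of the two low colour classes is a
maximum degree-`d` independent set. A leaf on a high vertex could be added to the class of the
other colour, so every leaf hangs on a degree-2 vertex, and once `n ≥ 4` no two leaves share one.
-/

open Finset SimpleGraph

namespace SimpleGraph

variable {V : Type*} {G : SimpleGraph V}

lemma degN_eq_degree (v : V) [Fintype (G.neighborSet v)] : degN G v = G.degree v := by
  rw [degN, ← Nat.card_coe_set_eq, Nat.card_eq_fintype_card, card_neighborSet_eq_degree]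

lemma adj_eq_of_degree_eq_one {u v w : V} [Fintype (G.neighborSet u)] (hu : G.degree u = 1)
    (hv : G.Adj u v) (hw : G.Adj u w) : v = w :=
  (degree_eq_one_iff_existsUnique_adj.mp hu).unique hv hw

variable [Fintype V]

lemma Preconnected.card_le_of_forall_adj_mem (hG : G.Preconnected) {S : Finset V}
    (hS : ∀ v ∈ S, ∀ w, G.Adj v w → w ∈ S) (hne : S.Nonempty) : Fintype.card V ≤ #S := by
  obtain ⟨u, hu⟩ := hne
  have hmem (x : V) : x ∈ S := by
    obtain ⟨p⟩ := hG u x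
    induction p with
    | nil => exact hu
    | cons h _ ih => exact ih (hS _ hu _ h)
  exact card_le_card fun x _ => hmem x

variable [DecidableRel G.Adj]

lemma ncard_setOf_degN_eq (k : ℕ) : {v | degN G v = k}.ncard = #{v | G.degree v = k} := by
  simp only [degN_eq_degree]
  rw [← coe_filter_univ, Set.ncard_coe_finset]

lemma Preconnected.not_adj_of_degree_eq_one (hG : G.Preconnected) (hn : 2 < Fintype.card V)
    {u v : V} (hu : G.degree u = 1) (hv : G.degree v = 1) : ¬G.Adj u v := by
  intro huv
  classical
  have hclosed : ∀ x ∈ ({u, v} : Finset V), ∀ w, G.Adj x w → w ∈ ({u, v} : Finset V) := by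
    simp only [mem_insert, mem_singleton]
    rintro x (rfl | rfl) w hw
    · exact .inr (adj_eq_of_degree_eq_one hu hw huv)
    · exact .inl (adj_eq_of_degree_eq_one hv hw huv.symm)
  have := hG.card_le_of_forall_adj_mem hclosed (insert_nonempty _ _)
  have := card_le_two (a := u) (b := v)
  omega

lemma Preconnected.eq_of_degree_eq_one_of_adj (hG : G.Preconnected) (hn : 3 < Fintype.card V)
    {u₁ u₂ s : V} (hu₁ : G.degree u₁ = 1) (hu₂ : G.degree u₂ = 1) (hs : G.degree s = 2)
    (h₁ : G.Adj s u₁) (h₂ : G.Adj s u₂) : u₁ = u₂ := by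
  classical
  by_contra hne
  have hnbr : G.neighborFinset s = {u₁, u₂} :=
    (eq_of_subset_of_card_le (by simp [insert_subset_iff, h₁, h₂])
      (by rw [card_pair hne, card_neighborFinset_eq_degree, hs])).symm
  have hclosed : ∀ x ∈ ({u₁, s, u₂} : Finset V), ∀ w, G.Adj x w →
      w ∈ ({u₁, s, u₂} : Finset V) := by
    simp only [mem_insert, mem_singleton]
    rintro x (rfl | rfl | rfl) w hw
    · exact .inr (.inl (adj_eq_of_degree_eq_one hu₁ hw h₁.symm))
    · have : w ∈ G.neighborFinset x := by simpa using hw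
      rw [hnbr] at this
      simp only [mem_insert, mem_singleton] at this
      tauto
    · exact .inr (.inl (adj_eq_of_degree_eq_one hu₂ hw h₂.symm))
  have := hG.card_le_of_forall_adj_mem hclosed (insert_nonempty _ _)
  have := card_le_three (a := u₁) (b := s) (c := u₂)
  omega

lemma Preconnected.card_degree_eq_one_le (hG : G.Preconnected) (hn : 3 < Fintype.card V)
    (h : ∀ u w, G.degree u = 1 → G.Adj u w → G.degree w ≤ 2) :
    #{v | G.degree v = 1} ≤ #{v | G.degree v = 2} := by
  refine card_le_card_of_forall_subsingleton G.Adj ?_ ?_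
  · intro u hu
    simp only [mem_filter, mem_univ, true_and] at hu
    obtain ⟨w, hw, -⟩ := degree_eq_one_iff_existsUnique_adj.mp hu
    have hw0 : 0 < G.degree w := (G.degree_pos_iff_exists_adj w).2 ⟨u, hw.symm⟩
    have hw1 : G.degree w ≠ 1 := fun h1 => hG.not_adj_of_degree_eq_one (by omega) hu h1 hw
    have := h u w hu hw
    exact ⟨w, by simp only [mem_filter, mem_univ, true_and]; omega, hw⟩
  · intro s hs u₁ hu₁ u₂ hu₂
    simp only [mem_filter, mem_univ, true_and, Set.mem_ofPred_eq] at hs hu₁ hu₂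
    exact hG.eq_of_degree_eq_one_of_adj hn hu₁.1 hu₂.1 hs hu₁.2.symm hu₂.2.symm

lemma IsTree.card_degree_eq_one [Nontrivial V] (hT : G.IsTree) :
    #{v | G.degree v = 1} = 2 + ∑ v, (G.degree v - 2) := by
  have hpos := hT.connected.preconnected.degree_pos_of_nontrivial
  have hpt (v : V) : G.degree v + (if G.degree v = 1 then 1 else 0) = 2 + (G.degree v - 2) := by
    have := hpos v
    split_ifs <;> omega
  have hsum : ∑ v, (G.degree v + if G.degree v = 1 then 1 else 0)
      = ∑ v, (2 + (G.degree v - 2)) := sum_congr rfl fun v _ => hpt v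
  simp only [sum_add_distrib, sum_const, card_univ, smul_eq_mul, ← card_filter] at hsum
  have := G.sum_degrees_eq_twice_card_edges
  have := hT.card_edgeFinset
  omega

lemma IsTree.le_card_degree_eq_one [Nontrivial V] (hT : G.IsTree) (d : ℕ) :
    (d - 1) * #{v | d < G.degree v} + 2 + ∑ v with G.degree v ≤ d, (G.degree v - 2)
      ≤ #{v | G.degree v = 1} := by
  have hhigh : (d - 1) * #{v | d < G.degree v} ≤ ∑ v with d < G.degree v, (G.degree v - 2) := by
    rw [mul_comm, ← smul_eq_mul]
    exact card_nsmul_le_sum _ _ _ fun v hv => by simp only [mem_filter] at hv; omega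
  have hsplit := sum_filter_add_sum_filter_not univ (fun v => G.degree v ≤ d) (G.degree · - 2)
  simp only [not_le] at hsplit
  rw [hT.card_degree_eq_one]
  omega

lemma IsTree.degree_le_two_of_card_degree_eq_one_le [Nontrivial V] (hT : G.IsTree) {d : ℕ}
    (h : #{v | G.degree v = 1} ≤ (d - 1) * #{v | d < G.degree v} + 2) {v : V}
    (hv : G.degree v ≤ d) : G.degree v ≤ 2 := by
  have hexcess := hT.le_card_degree_eq_one d
  have := sum_eq_zero_iff.mp (by omega : ∑ v with G.degree v ≤ d, (G.degree v - 2) = 0) v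
    (by simpa using hv)
  omega

lemma card_le_alphaD {d : ℕ} {S : Finset V} (hS : ∀ v ∈ S, ∀ w ∈ S, ¬G.Adj v w)
    (hdeg : ∀ v ∈ S, G.degree v ≤ d) : #S ≤ alphaD G d :=
  le_csSup ⟨Fintype.card V, by rintro _ ⟨Q, -, -, rfl⟩; exact Q.card_le_univ⟩
    ⟨S, hS, fun v hv => (degN_eq_degree v).trans_le (hdeg v hv), rfl⟩

lemma Preconnected.card_degree_eq_one_le_alphaD (hG : G.Preconnected) (hn : 2 < Fintype.card V)
    {d : ℕ} (hd : 1 ≤ d) : #{v | G.degree v = 1} ≤ alphaD G d :=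
  card_le_alphaD (fun v hv w hw => by
      simp only [mem_filter, mem_univ, true_and] at hv hw
      exact hG.not_adj_of_degree_eq_one hn hv hw)
    fun v hv => by simp only [mem_filter, mem_univ, true_and] at hv; omega

section Coloring

variable {α : Type*} (c : G.Coloring α) (d : ℕ)

lemma Coloring.card_low_colorClass_le_alphaD [DecidableEq α] (i : α) :
    #{v | G.degree v ≤ d ∧ c v = i} ≤ alphaD G d :=
  card_le_alphaD (fun v hv w hw hvw => by
      simp only [mem_filter, mem_univ, true_and] at hv hw
      exact c.valid hvw (hv.2.trans hw.2.symm))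
    fun v hv => (mem_filter.mp hv).2.1

lemma Coloring.card_low_colorClass_lt_alphaD [DecidableEq α] {i : α} {u : V}
    (hu : G.degree u ≤ d) (hui : c u ≠ i) (hnbr : ∀ w, G.Adj u w → d < G.degree w) :
    #{v | G.degree v ≤ d ∧ c v = i} < alphaD G d := by
  classical
  set S : Finset V := {v | G.degree v ≤ d ∧ c v = i}
  have hmem {v : V} : v ∈ S ↔ G.degree v ≤ d ∧ c v = i := by simp [S]
  have huS : u ∉ S := fun h => hui (hmem.mp h).2
  have hindep : ∀ v ∈ insert u S, ∀ w ∈ insert u S, ¬G.Adj v w := by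
    simp only [mem_insert, hmem]
    rintro v (rfl | hv) w (rfl | hw) hvw
    · exact G.irrefl hvw
    · exact (hnbr w hvw).not_ge hw.1
    · exact (hnbr v hvw.symm).not_ge hv.1
    · exact c.valid hvw (hv.2.trans hw.2.symm)
  have := card_le_alphaD hindep fun v hv => by
    rcases mem_insert.mp hv with rfl | hv
    exacts [hu, (hmem.mp hv).1]
  rwa [card_insert_of_notMem huS, Nat.add_one_le_iff] at this

lemma Coloring.card_low_eq_sum [Fintype α] [DecidableEq α] :
    #{v | G.degree v ≤ d} = ∑ i, #{v | G.degree v ≤ d ∧ c v = i} := by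
  rw [card_eq_sum_card_fiberwise (f := c) (t := univ) fun _ _ => mem_coe.2 (mem_univ _)]
  simp only [filter_filter]

end Coloring

variable {k : ℕ} (d : ℕ)

lemma Colorable.card_low_le_mul_alphaD (h : G.Colorable k) :
    #{v | G.degree v ≤ d} ≤ k * alphaD G d := by
  obtain ⟨c⟩ := h
  rw [c.card_low_eq_sum]
  exact (sum_le_sum fun i _ => c.card_low_colorClass_le_alphaD d i).trans_eq (by simp)

lemma Colorable.card_low_lt_mul_alphaD (h : G.Colorable k) (hk : 2 ≤ k) {u : V}
    (hu : G.degree u ≤ d) (hnbr : ∀ w, G.Adj u w → d < G.degree w) :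
    #{v | G.degree v ≤ d} < k * alphaD G d := by
  obtain ⟨c⟩ := h
  have : Nontrivial (Fin k) := Fin.nontrivial_iff_two_le.mpr hk
  obtain ⟨i, hi⟩ := exists_ne (c u)
  rw [c.card_low_eq_sum]
  refine (sum_lt_sum (fun i _ => c.card_low_colorClass_le_alphaD d i)
    ⟨i, mem_univ _, c.card_low_colorClass_lt_alphaD d hu hi.symm hnbr⟩).trans_eq (by simp)

end SimpleGraph

lemma extremal_equality_case {k a l low high : ℕ} (hk : 0 < k) (hla : l ≤ a)
    (hl : k * high + 2 ≤ l) (hlow : low ≤ 2 * a)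
    (hext : (2 * k + 1) * a = k * (low + high) + 2) : low = 2 * a ∧ l = k * high + 2 := by
  have hklow : k * low ≤ k * (2 * a) := Nat.mul_le_mul_left k hlow
  have hklow' : k * low = k * (2 * a) := by nlinarith
  refine ⟨Nat.eq_of_mul_eq_mul_left hk hklow', ?_⟩
  nlinarith

/-- Let `d ≥ 2` and let `T` be an `α_d`-extremal tree on `n ≥ 5` vertices,
i.e. `α_d(T) = ((d-1)n+2)/(2d-1)`. Then `T` has at least as many degree-2 vertices as
leaves. -/
theorem stmt15 {V : Type*} [Fintype V] (d : ℕ) (hd : 2 ≤ d) (T : SimpleGraph V)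
    (hT : T.IsTree) (hn : 5 ≤ Fintype.card V)
    (hext : (alphaD T d : ℝ)
      = (((d : ℝ) - 1) * Fintype.card V + 2) / (2 * (d : ℝ) - 1)) :
    {v : V | degN T v = 1}.ncard ≤ {v : V | degN T v = 2}.ncard := by
  classical
  have hG := hT.connected.preconnected
  have : Nontrivial V := Fintype.one_lt_card_iff_nontrivial.mp (by omega)
  have hextN : (2 * (d - 1) + 1) * alphaD T d = (d - 1) * Fintype.card V + 2 := by
    have hdR : (2 : ℝ) ≤ d := by exact_mod_cast hd
    rw [eq_div_iff (by linarith)] at hext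
    exact_mod_cast (by push_cast [Nat.cast_sub (by omega : 1 ≤ d)]; linarith :
      (((2 * (d - 1) + 1) * alphaD T d : ℕ) : ℝ) = (((d - 1) * Fintype.card V + 2 : ℕ) : ℝ))
  have hcard : #{v | T.degree v ≤ d} + #{v | d < T.degree v} = Fintype.card V := by
    simpa only [not_le, card_univ] using
      card_filter_add_card_filter_not (s := univ) (T.degree · ≤ d)
  obtain ⟨hlow, htight⟩ := extremal_equality_case (by omega)
    (hG.card_degree_eq_one_le_alphaD (by omega) (by omega))
    ((le_add_right le_rfl).trans (hT.le_card_degree_eq_one d))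
    (hT.colorable_two.card_low_le_mul_alphaD d) (hcard ▸ hextN)
  have hsupport (u w : V) (hu : T.degree u = 1) (huw : T.Adj u w) : T.degree w ≤ d := by
    by_contra! hw
    have := hT.colorable_two.card_low_lt_mul_alphaD d le_rfl (by omega : T.degree u ≤ d)
      fun x hx => adj_eq_of_degree_eq_one hu huw hx ▸ hw
    omega
  rw [ncard_setOf_degN_eq, ncard_setOf_degN_eq]
  exact hG.card_degree_eq_one_le (by omega) fun u w hu huw =>
    hT.degree_le_two_of_card_degree_eq_one_le htight.le (hsupport u w hu huw)
end

section
/- Let G be an interval graph with clique number ω(G) ≤ k+1, given by an interval representation assigning to each vertex v a closed interval [L(v), R(v)] ⊆ ℝ with all 2|V(G)| endpoints distinct, such that vw is an edge if and only if the intervals of v and w intersect. If G has a vertex v with deg(v) ≥ 2k+1, then there is a vertex w with L(v) < L(w) < R(w) < R(v) (i.e., w is dominated by v) and deg(w) ≤ 2k-1. -/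
theorem SimpleGraph.IsClique.ncard_le_of_cliqueFree {V : Type*} [Finite V] {G : SimpleGraph V}
    {s : Set V} {n : ℕ} (hs : G.IsClique s) (hG : G.CliqueFree (n + 1)) : s.ncard ≤ n := by
  by_contra! h
  obtain ⟨t, hts, ht⟩ := Set.exists_subset_card_eq (Nat.succ_le_of_lt h)
  exact hG t.toFinite.toFinset
    ⟨by simpa using hs.subset hts, (Set.ncard_eq_toFinset_card t).symm.trans ht⟩

section IntervalGraph

variable {V : Type*} {G : SimpleGraph V} {L R : V → ℝ}

theorem ncard_intervals_through_diff_singleton_le [Finite V] {k : ℕ}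
    (hadj : ∀ v w : V, G.Adj v w ↔
      v ≠ w ∧ (Set.Icc (L v) (R v) ∩ Set.Icc (L w) (R w)).Nonempty)
    (hclique : G.CliqueFree (k + 2)) {p : ℝ} {w : V} (hw : L w ≤ p ∧ p ≤ R w) :
    ({u | L u ≤ p ∧ p ≤ R u} \ {w}).ncard ≤ k := by
  have hclique_through : G.IsClique {u | L u ≤ p ∧ p ≤ R u} :=
    fun a ha b hb hab => (hadj a b).2 ⟨hab, p, ha, hb⟩
  have := hclique_through.ncard_le_of_cliqueFree hclique
  rw [Set.ncard_sdiff_singleton_of_mem (s := {u | L u ≤ p ∧ p ≤ R u}) hw]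
  omega

theorem contains_left_or_contains_right_or_dominated (hL : L.Injective) (hR : R.Injective)
    (hadj : ∀ v w : V, G.Adj v w ↔
      v ≠ w ∧ (Set.Icc (L v) (R v) ∩ Set.Icc (L w) (R w)).Nonempty)
    {w u : V} (hwu : G.Adj w u) :
    (L u ≤ L w ∧ L w ≤ R u) ∨ (L u ≤ R w ∧ R w ≤ R u) ∨ (L w < L u ∧ R u < R w) := by
  obtain ⟨hne, x, ⟨hwx, hxw⟩, hux, hxu⟩ := (hadj w u).1 hwu
  rcases (hL.ne hne).lt_or_gt with hLwu | hLuw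
  · rcases (hR.ne hne).lt_or_gt with hRwu | hRuw
    · exact Or.inr (Or.inl ⟨hux.trans hxw, hRwu.le⟩)
    · exact Or.inr (Or.inr ⟨hLwu, hRuw⟩)
  · exact Or.inl ⟨hLuw.le, hwx.trans hxu⟩

theorem degN_add_ncard_covering_le [Finite V] {k : ℕ} (hLR : ∀ v : V, L v < R v)
    (hL : L.Injective) (hR : R.Injective)
    (hadj : ∀ v w : V, G.Adj v w ↔
      v ≠ w ∧ (Set.Icc (L v) (R v) ∩ Set.Icc (L w) (R w)).Nonempty)
    (hclique : G.CliqueFree (k + 2)) {w : V} (hw : ∀ u, ¬(L w < L u ∧ R u < R w)) :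
    degN G w + ({u | L u ≤ L w ∧ R w ≤ R u} \ {w}).ncard ≤ 2 * k := by
  set A := {u | L u ≤ L w ∧ L w ≤ R u} \ {w}
  set B := {u | L u ≤ R w ∧ R w ≤ R u} \ {w}
  have hnbr : G.neighborSet w ⊆ A ∪ B := by
    intro u hu
    have hne : u ≠ w := (G.ne_of_adj hu).symm
    rcases contains_left_or_contains_right_or_dominated hL hR hadj hu with h | h | h
    · exact Or.inl ⟨h, hne⟩
    · exact Or.inr ⟨h, hne⟩
    · exact absurd h (hw u)
  have hcover : {u | L u ≤ L w ∧ R w ≤ R u} \ {w} ⊆ A ∩ B := by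
    rintro u ⟨⟨hLu, hRu⟩, hne⟩
    exact ⟨⟨⟨hLu, (hLR w).le.trans hRu⟩, hne⟩, ⟨hLu.trans (hLR w).le, hRu⟩, hne⟩
  have hA : A.ncard ≤ k :=
    ncard_intervals_through_diff_singleton_le hadj hclique ⟨le_rfl, (hLR w).le⟩
  have hB : B.ncard ≤ k :=
    ncard_intervals_through_diff_singleton_le hadj hclique ⟨(hLR w).le, le_rfl⟩
  calc degN G w + ({u | L u ≤ L w ∧ R w ≤ R u} \ {w}).ncard
      ≤ (A ∪ B).ncard + (A ∩ B).ncard :=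
        add_le_add (Set.ncard_le_ncard hnbr) (Set.ncard_le_ncard hcover)
    _ = A.ncard + B.ncard := Set.ncard_union_add_ncard_inter A B
    _ ≤ 2 * k := by omega

end IntervalGraph

/-- Let `G` be an interval graph with clique number at most `k+1`, given by
an interval representation `v ↦ [L v, R v]` with all `2|V|` endpoints distinct, where `v` and
`w` are adjacent iff their intervals intersect. If `v` is a vertex with `deg v ≥ 2k+1`, then
some vertex `w` is dominated by `v` (i.e. `L v < L w < R w < R v`) and has `deg w ≤ 2k-1`. -/
theorem stmt18 {V : Type*} [Fintype V] (k : ℕ) (G : SimpleGraph V)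
    (L R : V → ℝ) (hLR : ∀ v : V, L v < R v)
    (hadj : ∀ v w : V, G.Adj v w ↔
      v ≠ w ∧ (Set.Icc (L v) (R v) ∩ Set.Icc (L w) (R w)).Nonempty)
    (hdistinct : ∀ v w : V,
      (L v = L w → v = w) ∧ (R v = R w → v = w) ∧ L v ≠ R w)
    (hclique : G.CliqueFree (k + 2))
    (v : V) (hv : 2 * k + 1 ≤ degN G v) :
    ∃ w : V, L v < L w ∧ R w < R v ∧ degN G w ≤ 2 * k - 1 := by
  have hL : L.Injective := fun a b h => (hdistinct a b).1 h
  have hR : R.Injective := fun a b h => (hdistinct a b).2.1 h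
  set S := {w | L v < L w ∧ R w < R v}
  have hS : S.Nonempty := by
    by_contra! hS
    have := degN_add_ncard_covering_le hLR hL hR hadj hclique (w := v) fun u hu => hS.subset hu
    omega
  obtain ⟨w, ⟨hvw, hwv⟩, hmin⟩ := S.exists_min_image (fun u => R u - L u) S.toFinite hS
  refine ⟨w, hvw, hwv, ?_⟩
  have hw_min : ∀ u, ¬(L w < L u ∧ R u < R w) := fun u ⟨hwu, huw⟩ => by
    have := hmin u ⟨hvw.trans hwu, huw.trans hwv⟩
    linarith
  have hv_covers : v ∈ {u | L u ≤ L w ∧ R w ≤ R u} \ {w} :=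
    ⟨⟨hvw.le, hwv.le⟩, fun h => (h ▸ hvw).false⟩
  have := (Set.ncard_pos).2 ⟨v, hv_covers⟩
  have := degN_add_ncard_covering_le hLR hL hR hadj hclique hw_min
  omega
end

section
/- Every interval graph G with clique number ω(G) ≤ k+1 has a maximum independent set in which every vertex has degree at most 2k; that is, α_{2k}(G) = α(G). -/
/-- `α(G)`: the maximum cardinality of an independent set of `G`. -/
noncomputable def alphaN {V : Type*} [Fintype V] (G : SimpleGraph V) : ℕ :=
  sSup {m : ℕ | ∃ S : Finset V, (∀ v ∈ S, ∀ w ∈ S, ¬ G.Adj v w) ∧ S.card = m}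

open Finset

namespace SimpleGraph

variable {V : Type*} {G : SimpleGraph V}

theorem CliqueFree.card_le_of_isClique {n : ℕ} (hG : G.CliqueFree (n + 1)) {t : Finset V}
    (ht : G.IsClique (t : Set V)) : #t ≤ n := by
  by_contra! h
  obtain ⟨u, hut, hu⟩ := exists_subset_card_eq h
  exact hG u ⟨ht.subset (coe_subset.2 hut), hu⟩

theorem CliqueFree.ncard_le_of_isClique [Finite V] {n : ℕ} (hG : G.CliqueFree (n + 1))
    {s : Set V} (hs : G.IsClique s) : s.ncard ≤ n := by
  rw [Set.ncard_eq_toFinset_card s]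
  exact hG.card_le_of_isClique (by rwa [Set.Finite.coe_toFinset])

theorem isIndepSet_coe_iff {S : Finset V} :
    G.IsIndepSet (S : Set V) ↔ ∀ v ∈ S, ∀ w ∈ S, ¬G.Adj v w :=
  ⟨fun h _ hv _ hw hvw => h hv hw hvw.ne hvw, fun h _ hv _ hw _ => h _ hv _ hw⟩

theorem IsIndepSet.insert_erase [DecidableEq V] {S : Finset V} (hS : G.IsIndepSet (S : Set V))
    {v w : V} (hv : v ∈ S) (hN : ∀ u, u ≠ v → G.Adj w u → G.Adj v u) :
    G.IsIndepSet ((insert w (S.erase v) : Finset V) : Set V) := by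
  have hw : ∀ u ∈ S.erase v, ¬G.Adj w u := fun u hu hwu =>
    hS hv (mem_of_mem_erase hu) (ne_of_mem_erase hu).symm (hN u (ne_of_mem_erase hu) hwu)
  rw [coe_insert]
  exact (hS.mono (coe_subset.2 (erase_subset v S))).insert
    fun u hu _ => ⟨hw u hu, fun huw => hw u hu huw.symm⟩

variable {α : Type*} [LinearOrder α]

def IsIntervalModel (G : SimpleGraph V) (L R : V → α) : Prop :=
  (∀ v, L v ≤ R v) ∧
    ∀ v w, G.Adj v w ↔ v ≠ w ∧ (Set.Icc (L v) (R v) ∩ Set.Icc (L w) (R w)).Nonempty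

namespace IsIntervalModel

variable {L R : V → α}

theorem isClique_setOf_mem_Icc (hG : IsIntervalModel G L R) (p : α) :
    G.IsClique {v | p ∈ Set.Icc (L v) (R v)} :=
  fun v hv w hw hvw => (hG.2 v w).2 ⟨hvw, p, hv, hw⟩

theorem adj_of_Icc_subset (hG : IsIntervalModel G L R) {u v w : V}
    (hwv : Set.Icc (L w) (R w) ⊆ Set.Icc (L v) (R v)) (huv : u ≠ v) (hwu : G.Adj w u) :
    G.Adj v u :=
  (hG.2 v u).2 ⟨huv.symm, ((hG.2 w u).1 hwu).2.mono (Set.inter_subset_inter_left _ hwv)⟩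

theorem left_mem_or_right_mem_of_adj (hG : IsIntervalModel G L R) {v w : V}
    (hvw : G.Adj v w) (hnest : ¬(L v < L w ∧ R w < R v)) :
    L v ∈ Set.Icc (L w) (R w) ∨ R v ∈ Set.Icc (L w) (R w) := by
  obtain ⟨-, x, ⟨hLv, hRv⟩, hLw, hRw⟩ := (hG.2 v w).1 hvw
  by_cases h : L w ≤ L v
  · exact Or.inl ⟨h, hLv.trans hRw⟩
  · exact Or.inr ⟨hLw.trans hRv, le_of_not_gt fun h' => hnest ⟨lt_of_not_ge h, h'⟩⟩

theorem degN_le [Finite V] (hG : IsIntervalModel G L R) {k : ℕ} (hk : G.CliqueFree (k + 2))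
    {v : V} (hv : ∀ w, G.Adj v w → ¬(L v < L w ∧ R w < R v)) : degN G v ≤ 2 * k := by
  set A := {w | L v ∈ Set.Icc (L w) (R w)}
  set B := {w | R v ∈ Set.Icc (L w) (R w)}
  have hvA : v ∈ A := ⟨le_rfl, hG.1 v⟩
  have hvB : v ∈ B := ⟨hG.1 v, le_rfl⟩
  have hA : A.ncard ≤ k + 1 := hk.ncard_le_of_isClique (hG.isClique_setOf_mem_Icc (L v))
  have hB : B.ncard ≤ k + 1 := hk.ncard_le_of_isClique (hG.isClique_setOf_mem_Icc (R v))
  have hcover : G.neighborSet v ⊆ (A \ {v}) ∪ (B \ {v}) := fun w hw => by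
    have hwv : w ≠ v := (G.ne_of_adj hw).symm
    rcases hG.left_mem_or_right_mem_of_adj hw (hv w hw) with h | h
    exacts [Or.inl ⟨h, hwv⟩, Or.inr ⟨h, hwv⟩]
  calc degN G v ≤ ((A \ {v}) ∪ (B \ {v})).ncard := Set.ncard_le_ncard hcover
    _ ≤ (A \ {v}).ncard + (B \ {v}).ncard := Set.ncard_union_le _ _
    _ ≤ 2 * k := by
      rw [Set.ncard_sdiff_singleton_of_mem hvA, Set.ncard_sdiff_singleton_of_mem hvB]
      omega

theorem exists_isIndepSet_card_eq_forall_not_nested [AddCommGroup α] [IsOrderedAddMonoid α]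
    [Finite V] (hG : IsIntervalModel G L R) {S₀ : Finset V}
    (hS₀ : G.IsIndepSet (S₀ : Set V)) :
    ∃ S : Finset V, G.IsIndepSet (S : Set V) ∧ #S = #S₀ ∧
      ∀ v ∈ S, ∀ w, G.Adj v w → ¬(L v < L w ∧ R w < R v) := by
  classical
  obtain ⟨S, ⟨hS, hcard⟩, hmin⟩ := Set.exists_min_image
    {S : Finset V | G.IsIndepSet (S : Set V) ∧ #S = #S₀} (fun S => ∑ v ∈ S, (R v - L v))
    (Set.toFinite _) ⟨S₀, hS₀, rfl⟩
  refine ⟨S, hS, hcard, fun v hv w hvw ⟨hL, hR⟩ => ?_⟩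
  have hwS : w ∉ S.erase v := fun hw => hS hv (mem_of_mem_erase hw) (G.ne_of_adj hvw) hvw
  have hS' : G.IsIndepSet ((insert w (S.erase v) : Finset V) : Set V) :=
    hS.insert_erase hv fun _ => hG.adj_of_Icc_subset (Set.Icc_subset_Icc hL.le hR.le)
  have hcard' : #(insert w (S.erase v)) = #S₀ := by
    rw [card_insert_of_notMem hwS, card_erase_of_mem hv, ← hcard]
    have := card_pos.2 ⟨v, hv⟩
    omega
  have hshorter : ∑ u ∈ insert w (S.erase v), (R u - L u) < ∑ u ∈ S, (R u - L u) := by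
    rw [sum_insert hwS, ← add_sum_erase S _ hv]
    exact add_lt_add_left (sub_lt_sub hR hL) _
  exact (hmin _ ⟨hS', hcard'⟩).not_gt hshorter

end IsIntervalModel

end SimpleGraph

section IndependenceNumbers

variable {V : Type*} [Fintype V] (G : SimpleGraph V)

theorem alphaD_le_alphaN (d : ℕ) : alphaD G d ≤ alphaN G :=
  csSup_le_csSup ⟨Fintype.card V, by rintro _ ⟨S, -, rfl⟩; exact S.card_le_univ⟩
    ⟨0, ∅, by simp, by simp, rfl⟩ fun _ ⟨S, hS, _, hm⟩ => ⟨S, hS, hm⟩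

theorem exists_isIndepSet_card_eq_alphaN :
    ∃ S : Finset V, G.IsIndepSet (S : Set V) ∧ #S = alphaN G := by
  obtain ⟨S, hS, hcard⟩ := Nat.sSup_mem (s := {m : ℕ | ∃ S : Finset V,
    (∀ v ∈ S, ∀ w ∈ S, ¬G.Adj v w) ∧ #S = m}) ⟨0, ∅, by simp, rfl⟩
    ⟨Fintype.card V, by rintro _ ⟨S, -, rfl⟩; exact S.card_le_univ⟩
  exact ⟨S, SimpleGraph.isIndepSet_coe_iff.2 hS, hcard⟩

variable {G} in
theorem card_le_alphaD {d : ℕ} {S : Finset V} (hS : G.IsIndepSet (S : Set V))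
    (hd : ∀ v ∈ S, degN G v ≤ d) : #S ≤ alphaD G d :=
  le_csSup ⟨Fintype.card V, by rintro _ ⟨S, -, -, rfl⟩; exact S.card_le_univ⟩
    ⟨S, SimpleGraph.isIndepSet_coe_iff.1 hS, hd, rfl⟩

end IndependenceNumbers

/-- Every interval graph `G` with clique number at most `k+1` has a maximum
independent set in which every vertex has degree at most `2k`; that is,
`α_{2k}(G) = α(G)`. -/
theorem stmt19 {V : Type*} [Fintype V] (k : ℕ) (G : SimpleGraph V)
    (hint : ∃ L R : V → ℝ, (∀ v : V, L v ≤ R v) ∧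
      ∀ v w : V, G.Adj v w ↔
        v ≠ w ∧ (Set.Icc (L v) (R v) ∩ Set.Icc (L w) (R w)).Nonempty)
    (hclique : G.CliqueFree (k + 2)) :
    alphaD G (2 * k) = alphaN G := by
  obtain ⟨L, R, hG⟩ := hint
  have hG : G.IsIntervalModel L R := hG
  obtain ⟨S₀, hS₀, hcard⟩ := exists_isIndepSet_card_eq_alphaN G
  obtain ⟨S, hS, hSS₀, hnested⟩ := hG.exists_isIndepSet_card_eq_forall_not_nested hS₀
  refine (alphaD_le_alphaN G _).antisymm ?_
  rw [← hcard, ← hSS₀]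
  exact card_le_alphaD hS fun v hv => hG.degN_le hclique (hnested v hv)
end
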